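/- arXiv:1406.2587 — 6 statements merged into one kernel-verified Lean document; each statement's English description precedes it below -/
import Mathlib

section
/- For every finite graph G with at least one vertex and every integer r ≥ 0, the topological grad satisfies the strict inequalities ∇̃_r(G) < ∇̃_r(G ⋆ K₁) < ∇̃_r(G) + 1, where G ⋆ K₁ denotes the graph obtained from G by adding one new vertex adjacent to all vertices of G. -/
open SimpleGraph

/-- A model of a subdivision of `M` in `G` where each edge of `M` is replaced by a path
with at most `ℓ` internal vertices (i.e. of length at most `ℓ + 1`), the paths being
internally disjoint from each other and from the branch vertices. -/
def SimpleGraph.IsSubdivModel {V : Type*} (G : SimpleGraph V) {k : ℕ}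
    (M : SimpleGraph (Fin k)) (ℓ : ℕ) : Prop :=
  ∃ (φ : Fin k ↪ V) (P : ∀ u v : Fin k, M.Adj u v → G.Walk (φ u) (φ v)),
    (∀ u v (h : M.Adj u v), (P u v h).IsPath ∧ (P u v h).length ≤ ℓ + 1) ∧
    (∀ u v (h : M.Adj u v) (x : V),
        x ∈ (P u v h).support → x ≠ φ u → x ≠ φ v → x ∉ Set.range φ) ∧
    (∀ u v u' v' (h : M.Adj u v) (h' : M.Adj u' v'), s(u, v) ≠ s(u', v') →
        ∀ x : V, x ∈ (P u v h).support → x ∈ (P u' v' h').support →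
          (x = φ u ∨ x = φ v) ∧ (x = φ u' ∨ x = φ v'))

/-- The topological grad of `G` at depth `r`: the supremum of the densities `|E(M)|/|V(M)|`
over all graphs `M` admitting a `(≤ 2r)`-subdivision as a subgraph of `G`
(i.e. all `r`-shallow topological minors of `G`). -/
noncomputable def SimpleGraph.topGrad {V : Type*} (G : SimpleGraph V) (r : ℕ) : ℝ :=
  sSup {ρ : ℝ | ∃ (k : ℕ) (M : SimpleGraph (Fin k)),
    G.IsSubdivModel M (2 * r) ∧ ρ = (M.edgeSet.ncard : ℝ) / k}

/-- `G ⋆ K₁`: the graph obtained from `G` by adding one new universal vertex. -/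
def SimpleGraph.addUniversal {V : Type*} (G : SimpleGraph V) : SimpleGraph (Option V) :=
  SimpleGraph.fromRel (fun x y =>
    x = none ∨ y = none ∨ ∃ u v : V, x = some u ∧ y = some v ∧ G.Adj u v)


namespace TopGradAux

variable {V : Type*} {W : Type*}

@[simp] lemma addUniversal_adj_some_some (G : SimpleGraph V) (a b : V) :
    G.addUniversal.Adj (some a) (some b) ↔ G.Adj a b := by
  constructor
  · rintro ⟨hne, (h | h | ⟨u, v, hu, hv, h⟩) | (h | h | ⟨u, v, hu, hv, h⟩)⟩
    · exact absurd h (by simp)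
    · exact absurd h (by simp)
    · rw [Option.some_inj] at hu hv; subst hu; subst hv; exact h
    · exact absurd h (by simp)
    · exact absurd h (by simp)
    · rw [Option.some_inj] at hu hv; subst hu; subst hv; exact h.symm
  · intro h
    exact ⟨by simpa using h.ne, Or.inl (Or.inr (Or.inr ⟨a, b, rfl, rfl, h⟩))⟩

@[simp] lemma addUniversal_adj_none_some (G : SimpleGraph V) (a : V) :
    G.addUniversal.Adj none (some a) :=
  ⟨by simp, Or.inl (Or.inl rfl)⟩

@[simp] lemma addUniversal_adj_some_none (G : SimpleGraph V) (a : V) :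
    G.addUniversal.Adj (some a) none :=
  (addUniversal_adj_none_some G a).symm

/-- The model-density set whose supremum is `topGrad`. -/
def modelSet (G : SimpleGraph V) (r : ℕ) : Set ℝ :=
  {ρ : ℝ | ∃ (k : ℕ) (M : SimpleGraph (Fin k)),
    G.IsSubdivModel M (2 * r) ∧ ρ = (M.edgeSet.ncard : ℝ) / k}

lemma topGrad_eq (G : SimpleGraph V) (r : ℕ) : G.topGrad r = sSup (modelSet G r) := rfl

lemma zero_mem_modelSet (G : SimpleGraph V) (r : ℕ) : (0 : ℝ) ∈ modelSet G r := by
  refine ⟨0, ⊥, ⟨⟨fun i => i.elim0, fun i => i.elim0⟩, fun u => u.elim0, ?_, ?_, ?_⟩, by simp⟩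
  · exact fun u => u.elim0
  · exact fun u => u.elim0
  · exact fun u => u.elim0

lemma modelSet_nonneg {G : SimpleGraph V} {r : ℕ} {ρ : ℝ} (h : ρ ∈ modelSet G r) : 0 ≤ ρ := by
  obtain ⟨k, M, -, rfl⟩ := h
  positivity

lemma card_le_of_model [Fintype V] {k : ℕ} {G : SimpleGraph V} {M : SimpleGraph (Fin k)}
    {ℓ : ℕ} (h : G.IsSubdivModel M ℓ) : k ≤ Fintype.card V := by
  obtain ⟨φ, -⟩ := h
  simpa using Fintype.card_le_of_embedding φ

lemma ncard_edgeSet_le {k : ℕ} (M : SimpleGraph (Fin k)) :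
    M.edgeSet.ncard ≤ k.choose 2 := by
  classical
  have : M.edgeSet.ncard = M.edgeFinset.card := by
    rw [edgeFinset, Set.ncard_eq_toFinset_card']
  rw [this]
  simpa using M.card_edgeFinset_le_card_choose_two

lemma modelSet_finite [Fintype V] (G : SimpleGraph V) (r : ℕ) : (modelSet G r).Finite := by
  have : modelSet G r ⊆ (fun p : ℕ × ℕ => (p.1 : ℝ) / p.2) ''
      (Set.Iic ((Fintype.card V).choose 2) ×ˢ Set.Iic (Fintype.card V)) := by
    rintro ρ ⟨k, M, hM, rfl⟩
    refine ⟨(M.edgeSet.ncard, k), ⟨?_, card_le_of_model hM⟩, rfl⟩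
    exact le_trans (ncard_edgeSet_le M) (Nat.choose_le_choose 2 (card_le_of_model hM))
  exact Set.Finite.subset (Set.Finite.image _ (Set.Finite.prod (Set.finite_Iic _) (Set.finite_Iic _))) this

lemma modelSet_nonempty (G : SimpleGraph V) (r : ℕ) : (modelSet G r).Nonempty :=
  ⟨0, zero_mem_modelSet G r⟩


lemma exists_walk_map {G : SimpleGraph V} {G' : SimpleGraph W} (f : G →g G')
    (hinj : Function.Injective f)
    (hrev : ∀ a b : V, G'.Adj (f a) (f b) → G.Adj a b)
    {x y : W} (p : G'.Walk x y) :
    ∀ (a b : V) (ha : f a = x) (hb : f b = y),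
      (∀ z ∈ p.support, z ∈ Set.range f) →
      ∃ q : G.Walk a b, q.map f = p.copy ha.symm hb.symm := by
  induction p with
  | nil =>
    intro a b ha hb _
    subst ha
    have : b = a := hinj hb
    subst this
    exact ⟨Walk.nil, by simp⟩
  | @cons x x' y h p ih =>
    intro a b ha hb hsup
    subst ha
    obtain ⟨a', ha'⟩ := hsup x' (by simp [Walk.support_cons])
    subst ha'
    obtain ⟨q', hq'⟩ := ih a' b rfl hb (fun z hz => hsup z (by simp [Walk.support_cons, hz]))
    refine ⟨Walk.cons (hrev _ _ h) q', ?_⟩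
    simp only [Walk.map_cons, hq', Walk.copy_cons, Walk.copy_rfl_rfl]

lemma model_pull {G : SimpleGraph V} {G' : SimpleGraph W} (f : G →g G')
    (hinj : Function.Injective f)
    (hrev : ∀ a b : V, G'.Adj (f a) (f b) → G.Adj a b)
    {k ℓ : ℕ} {M : SimpleGraph (Fin k)}
    (φ : Fin k ↪ W) (P : ∀ u v : Fin k, M.Adj u v → G'.Walk (φ u) (φ v))
    (h1 : ∀ u v (h : M.Adj u v), (P u v h).IsPath ∧ (P u v h).length ≤ ℓ + 1)
    (h2 : ∀ u v (h : M.Adj u v) (x : W),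
        x ∈ (P u v h).support → x ≠ φ u → x ≠ φ v → x ∉ Set.range φ)
    (h3 : ∀ u v u' v' (h : M.Adj u v) (h' : M.Adj u' v'), s(u, v) ≠ s(u', v') →
        ∀ x : W, x ∈ (P u v h).support → x ∈ (P u' v' h').support →
          (x = φ u ∨ x = φ v) ∧ (x = φ u' ∨ x = φ v'))
    (hφ : ∀ i, φ i ∈ Set.range f)
    (hP : ∀ u v (h : M.Adj u v) (z : W), z ∈ (P u v h).support → z ∈ Set.range f) :
    G.IsSubdivModel M ℓ := by
  classical
  choose φ₀ hφ₀ using hφ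
  have hφ₀inj : Function.Injective φ₀ := fun i j hij => by
    apply φ.injective; rw [← hφ₀ i, ← hφ₀ j, hij]
  choose Q hQ using fun u v (h : M.Adj u v) =>
    exists_walk_map f hinj hrev (P u v h) (φ₀ u) (φ₀ v) (hφ₀ u) (hφ₀ v) (hP u v h)
  have hsupp : ∀ u v (h : M.Adj u v) (z : V),
      z ∈ (Q u v h).support → f z ∈ (P u v h).support := by
    intro u v h z hz
    have : f z ∈ ((Q u v h).map f).support := by
      rw [Walk.support_map]; exact List.mem_map_of_mem hz
    rwa [hQ, Walk.support_copy] at this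
  refine ⟨⟨φ₀, hφ₀inj⟩, Q, ?_, ?_, ?_⟩
  · intro u v h
    have hp := h1 u v h
    constructor
    · have : ((Q u v h).map f).IsPath := by
        rw [hQ, Walk.isPath_copy]; exact hp.1
      exact this.of_map
    · have : ((Q u v h).map f).length = (P u v h).length := by rw [hQ, Walk.length_copy]
      rw [Walk.length_map] at this
      rw [this]; exact hp.2
  · rintro u v h x hx hxu hxv ⟨j, rfl⟩
    simp only [Function.Embedding.coeFn_mk] at hx hxu hxv ⊢
    refine h2 u v h (f (φ₀ j)) (hsupp u v h _ hx) ?_ ?_ ⟨j, (hφ₀ j).symm⟩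
    · rw [← hφ₀ u]; exact fun hc => hxu (hinj hc)
    · rw [← hφ₀ v]; exact fun hc => hxv (hinj hc)
  · intro u v u' v' h h' hne x hx hx'
    have := h3 u v u' v' h h' hne (f x) (hsupp u v h x hx) (hsupp u' v' h' x hx')
    simp only [Function.Embedding.coeFn_mk]
    constructor
    · rcases this.1 with hc | hc
      · left; apply hinj; rw [hc, hφ₀]
      · right; apply hinj; rw [hc, hφ₀]
    · rcases this.2 with hc | hc
      · left; apply hinj; rw [hc, hφ₀]
      · right; apply hinj; rw [hc, hφ₀]


/-- The cone over `M`: add the vertex `Fin.last k` joined to everything. -/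
def cone {k : ℕ} (M : SimpleGraph (Fin k)) : SimpleGraph (Fin (k + 1)) :=
  M.map (⟨Fin.castSucc, Fin.castSucc_injective k⟩ : Fin k ↪ Fin (k + 1)) ⊔
    SimpleGraph.fromRel (fun x _ => x = Fin.last k)

lemma edgeSet_map' (f : V ↪ W) (G : SimpleGraph V) :
    (G.map f).edgeSet = Sym2.map f '' G.edgeSet := by
  ext e
  induction e with
  | _ x y =>
    simp only [mem_edgeSet, map_adj, Set.mem_image]
    constructor
    · rintro ⟨a, b, hab, rfl, rfl⟩
      exact ⟨s(a, b), hab, Sym2.map_pair_eq f a b⟩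
    · rintro ⟨e', he', hmap⟩
      induction e' with
      | _ a b =>
        rw [Sym2.map_pair_eq, Sym2.eq_iff] at hmap
        rcases hmap with ⟨rfl, rfl⟩ | ⟨rfl, rfl⟩
        · exact ⟨a, b, he', rfl, rfl⟩
        · exact ⟨b, a, he'.symm, rfl, rfl⟩

lemma cone_adj {k : ℕ} (M : SimpleGraph (Fin k)) (x y : Fin (k + 1)) :
    (cone M).Adj x y ↔
      (∃ a b : Fin k, M.Adj a b ∧ Fin.castSucc a = x ∧ Fin.castSucc b = y) ∨
        (x ≠ y ∧ (x = Fin.last k ∨ y = Fin.last k)) := by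
  rw [cone, sup_adj, map_adj]
  simp [fromRel_adj]

lemma cone_adj_extract {k : ℕ} {M : SimpleGraph (Fin k)} {x y : Fin (k + 1)}
    (h : (cone M).Adj x y) (hx : x ≠ Fin.last k) (hy : y ≠ Fin.last k) :
    M.Adj (x.castPred hx) (y.castPred hy) := by
  rw [cone_adj] at h
  rcases h with ⟨a, b, hab, rfl, rfl⟩ | ⟨-, h | h⟩
  · rwa [Fin.castPred_castSucc, Fin.castPred_castSucc]
  · exact absurd h hx
  · exact absurd h hy

lemma cone_adj_of_adj {k : ℕ} {M : SimpleGraph (Fin k)} {a b : Fin k} (h : M.Adj a b) :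
    (cone M).Adj (Fin.castSucc a) (Fin.castSucc b) :=
  (cone_adj M _ _).mpr (Or.inl ⟨a, b, h, rfl, rfl⟩)

lemma cone_adj_last {k : ℕ} (M : SimpleGraph (Fin k)) (a : Fin k) :
    (cone M).Adj (Fin.last k) (Fin.castSucc a) :=
  (cone_adj M _ _).mpr (Or.inr ⟨((Fin.castSucc_lt_last a).ne).symm, Or.inl rfl⟩)

lemma cone_edgeSet_ncard {k : ℕ} (M : SimpleGraph (Fin k)) :
    (cone M).edgeSet.ncard = M.edgeSet.ncard + k := by
  classical
  have hdecomp : (cone M).edgeSet =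
      (Sym2.map Fin.castSucc '' M.edgeSet) ∪
        ((fun a : Fin k => s(Fin.castSucc a, Fin.last k)) '' Set.univ) := by
    rw [cone, edgeSet_sup, edgeSet_map']
    congr 1
    ext e
    induction e with
    | _ x y =>
      simp only [mem_edgeSet, fromRel_adj, Set.image_univ, Set.mem_range]
      constructor
      · rintro ⟨hne, rfl | rfl⟩
        · have hy : y ≠ Fin.last k := fun hy => hne (hy ▸ rfl)
          exact ⟨y.castPred hy, by rw [Fin.castSucc_castPred, Sym2.eq_swap]⟩
        · have hx : x ≠ Fin.last k := fun hx => hne (hx ▸ rfl)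
          exact ⟨x.castPred hx, by rw [Fin.castSucc_castPred]⟩
      · rintro ⟨a, ha⟩
        rw [Sym2.eq_iff] at ha
        rcases ha with ⟨rfl, rfl⟩ | ⟨rfl, rfl⟩
        · exact ⟨((Fin.castSucc_lt_last a).ne), Or.inr rfl⟩
        · exact ⟨((Fin.castSucc_lt_last a).ne).symm, Or.inl rfl⟩
  rw [hdecomp, Set.ncard_union_eq ?disj (Set.toFinite _) (Set.toFinite _)]
  · congr 1
    · exact Set.ncard_image_of_injective _ (Sym2.map.injective (Fin.castSucc_injective k))
    · rw [Set.ncard_image_of_injective _ ?inj, Set.ncard_univ, Nat.card_eq_fintype_card,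
        Fintype.card_fin]
      intro a b hab
      rw [Sym2.eq_iff] at hab
      rcases hab with ⟨h, -⟩ | ⟨h, h'⟩
      · exact Fin.castSucc_injective k h
      · exact absurd h' ((Fin.castSucc_lt_last b).ne).symm
  · rw [Set.disjoint_left]
    rintro e ⟨e', he', rfl⟩ ⟨a, -, ha⟩
    induction e' with
    | _ x y =>
      rw [Sym2.map_pair_eq, Sym2.eq_iff] at ha
      rcases ha with ⟨-, h⟩ | ⟨-, h⟩
      · exact absurd h.symm ((Fin.castSucc_lt_last y).ne)
      · exact absurd h.symm ((Fin.castSucc_lt_last x).ne)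



@[reducible] def someHom (G : SimpleGraph V) : G →g G.addUniversal :=
  ⟨some, fun h => (addUniversal_adj_some_some G _ _).mpr h⟩

@[simp] lemma someHom_apply (G : SimpleGraph V) (a : V) : someHom G a = some a := rfl

lemma isPath_toWalk {G : SimpleGraph V} {u v : V} (h : G.Adj u v) : h.toWalk.IsPath := by
  simp [Adj.toWalk, Walk.isPath_def, h.ne]

def coneVert {k : ℕ} (φ : Fin k ↪ V) : Fin (k + 1) → Option V := fun i =>
  if h : i = Fin.last k then none else some (φ (i.castPred h))

lemma coneVert_last {k : ℕ} (φ : Fin k ↪ V) : coneVert φ (Fin.last k) = none := dif_pos rfl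

lemma coneVert_ne_last {k : ℕ} (φ : Fin k ↪ V) (i : Fin (k + 1)) (h : i ≠ Fin.last k) :
    coneVert φ i = some (φ (i.castPred h)) := dif_neg h

lemma coneVert_injective {k : ℕ} (φ : Fin k ↪ V) : Function.Injective (coneVert φ) := by
  intro i j hij
  by_cases hi : i = Fin.last k <;> by_cases hj : j = Fin.last k
  · rw [hi, hj]
  · rw [hi, coneVert_last, coneVert_ne_last φ j hj] at hij; exact absurd hij (by simp)
  · rw [hj, coneVert_last, coneVert_ne_last φ i hi] at hij; exact absurd hij (by simp)
  · rw [coneVert_ne_last φ i hi, coneVert_ne_last φ j hj] at hij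
    have := φ.injective (Option.some_injective _ hij)
    rw [← Fin.castSucc_castPred i hi, ← Fin.castSucc_castPred j hj, this]

lemma addUniversal_adj_none_coneVert (G : SimpleGraph V) {k : ℕ} (φ : Fin k ↪ V)
    (v : Fin (k + 1)) (hv : v ≠ Fin.last k) :
    G.addUniversal.Adj none (coneVert φ v) := by
  rw [coneVert_ne_last φ v hv]; exact addUniversal_adj_none_some G _

def conePath {G : SimpleGraph V} {k : ℕ} {M : SimpleGraph (Fin k)} (φ : Fin k ↪ V)
    (P : ∀ u v, M.Adj u v → G.Walk (φ u) (φ v)) (u v : Fin (k + 1))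
    (h : (cone M).Adj u v) : (G.addUniversal).Walk (coneVert φ u) (coneVert φ v) :=
  if hu : u = Fin.last k then
    ((addUniversal_adj_none_coneVert G φ v (fun hv => h.ne (hu.trans hv.symm))).toWalk).copy
      (by rw [hu, coneVert_last]) rfl
  else if hv : v = Fin.last k then
    (((addUniversal_adj_none_coneVert G φ u hu).symm).toWalk).copy rfl
      (by rw [hv, coneVert_last])
  else
    ((P _ _ (cone_adj_extract h hu hv)).map (someHom G)).copy
      (coneVert_ne_last φ u hu).symm (coneVert_ne_last φ v hv).symm

lemma cone_model {G : SimpleGraph V} {k ℓ : ℕ} {M : SimpleGraph (Fin k)}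
    (hmod : G.IsSubdivModel M ℓ) : (G.addUniversal).IsSubdivModel (cone M) ℓ := by
  classical
  obtain ⟨φ, P, h1, h2, h3⟩ := hmod
  have hsome : Function.Injective (someHom G : V → Option V) := Option.some_injective V
  -- support membership in the star branches is endpoint membership; in map branch some-image
  have hE : ∀ u v (h : (cone M).Adj u v) (x : Option V), x ∈ (conePath φ P u v h).support →
      x ∈ Set.range (coneVert φ) → x = coneVert φ u ∨ x = coneVert φ v := by
    intro u v h x hx hxr
    by_cases hu : u = Fin.last k
    · simp only [conePath, dif_pos hu, Walk.support_copy, Adj.toWalk, Walk.support_cons,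
        Walk.support_nil, List.mem_cons, List.mem_singleton, List.not_mem_nil, or_false] at hx
      rcases hx with rfl | rfl
      · left; rw [hu, coneVert_last]
      · right; rfl
    · by_cases hv : v = Fin.last k
      · simp only [conePath, dif_neg hu, dif_pos hv, Walk.support_copy, Adj.toWalk,
          Walk.support_cons, Walk.support_nil, List.mem_cons, List.mem_singleton,
          List.not_mem_nil, or_false] at hx
        rcases hx with rfl | rfl
        · left; rfl
        · right; rw [hv, coneVert_last]
      · simp only [conePath, dif_neg hu, dif_neg hv, Walk.support_copy, Walk.support_map] at hx
        obtain ⟨z, hz, rfl⟩ := List.mem_map.mp hx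
        obtain ⟨j, hj⟩ := hxr
        by_cases hjl : j = Fin.last k
        · rw [hjl, coneVert_last] at hj; exact absurd hj (by simp)
        · rw [coneVert_ne_last φ j hjl] at hj
          have hzφ : someHom G z = some (φ (j.castPred hjl)) := hj.symm
          have hz2 : z ∈ Set.range φ := ⟨j.castPred hjl, (Option.some_injective V hzφ).symm⟩
          by_cases hzu : z = φ (u.castPred hu)
          · left; rw [coneVert_ne_last φ u hu]; exact congrArg some hzu
          · by_cases hzv : z = φ (v.castPred hv)
            · right; rw [coneVert_ne_last φ v hv]; exact congrArg some hzv
            · exact absurd hz2 (h2 _ _ (cone_adj_extract h hu hv) z hz hzu hzv)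
  have hS : ∀ u v (h : (cone M).Adj u v) (x : Option V), x ∈ (conePath φ P u v h).support →
      x ∉ Set.range (coneVert φ) →
      ∃ (hu : u ≠ Fin.last k) (hv : v ≠ Fin.last k) (z : V), x = some z ∧
        z ∈ (P (u.castPred hu) (v.castPred hv) (cone_adj_extract h hu hv)).support := by
    intro u v h x hx hxr
    by_cases hu : u = Fin.last k
    · simp only [conePath, dif_pos hu, Walk.support_copy, Adj.toWalk, Walk.support_cons,
        Walk.support_nil, List.mem_cons, List.mem_singleton, List.not_mem_nil, or_false] at hx
      rcases hx with rfl | rfl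
      · exact absurd ⟨Fin.last k, coneVert_last φ⟩ hxr
      · exact absurd ⟨v, rfl⟩ hxr
    · by_cases hv : v = Fin.last k
      · simp only [conePath, dif_neg hu, dif_pos hv, Walk.support_copy, Adj.toWalk,
          Walk.support_cons, Walk.support_nil, List.mem_cons, List.mem_singleton,
          List.not_mem_nil, or_false] at hx
        rcases hx with rfl | rfl
        · exact absurd ⟨u, rfl⟩ hxr
        · exact absurd ⟨Fin.last k, coneVert_last φ⟩ hxr
      · simp only [conePath, dif_neg hu, dif_neg hv, Walk.support_copy, Walk.support_map] at hx
        obtain ⟨z, hz, rfl⟩ := List.mem_map.mp hx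
        exact ⟨hu, hv, z, rfl, hz⟩
  refine ⟨⟨coneVert φ, coneVert_injective φ⟩, conePath φ P, ?_, ?_, ?_⟩
  · intro u v h
    by_cases hu : u = Fin.last k
    · constructor
      · simp only [conePath, dif_pos hu, Walk.isPath_copy]
        exact isPath_toWalk _
      · simp only [conePath, dif_pos hu, Walk.length_copy, Adj.toWalk, Walk.length_cons,
          Walk.length_nil]
        omega
    · by_cases hv : v = Fin.last k
      · constructor
        · simp only [conePath, dif_neg hu, dif_pos hv, Walk.isPath_copy]
          exact isPath_toWalk _
        · simp only [conePath, dif_neg hu, dif_pos hv, Walk.length_copy, Adj.toWalk,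
            Walk.length_cons, Walk.length_nil]
          omega
      · constructor
        · simp only [conePath, dif_neg hu, dif_neg hv, Walk.isPath_copy]
          exact Walk.map_isPath_of_injective hsome (h1 _ _ _).1
        · simp only [conePath, dif_neg hu, dif_neg hv, Walk.length_copy, Walk.length_map]
          exact (h1 _ _ _).2
  · intro u v h x hx hxu hxv hxr
    simp only [Function.Embedding.coeFn_mk] at hxu hxv hxr
    rcases hE u v h x hx hxr with hc | hc
    · exact hxu hc
    · exact hxv hc
  · intro u v u' v' h h' hne x hx hx'
    simp only [Function.Embedding.coeFn_mk]
    by_cases hxr : x ∈ Set.range (coneVert φ)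
    · exact ⟨hE u v h x hx hxr, hE u' v' h' x hx' hxr⟩
    · obtain ⟨hu, hv, z, rfl, hz⟩ := hS u v h x hx hxr
      obtain ⟨hu', hv', z', hzz, hz'⟩ := hS u' v' h' (some z) hx' hxr
      have hz'' : z = z' := Option.some_injective V hzz
      subst hz''
      have hne2 : s(u.castPred hu, v.castPred hv) ≠ s(u'.castPred hu', v'.castPred hv') := by
        intro hc
        apply hne
        have := congrArg (Sym2.map (Fin.castSucc : Fin k → Fin (k+1))) hc
        rwa [Sym2.map_pair_eq, Sym2.map_pair_eq, Fin.castSucc_castPred, Fin.castSucc_castPred,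
          Fin.castSucc_castPred, Fin.castSucc_castPred] at this
      have := h3 _ _ _ _ _ _ hne2 z hz hz'
      exfalso
      apply hxr
      rcases this.1 with hc | hc
      · exact ⟨u, by rw [coneVert_ne_last φ u hu, hc]⟩
      · exact ⟨v, by rw [coneVert_ne_last φ v hv, hc]⟩



lemma trivial_model (G : SimpleGraph V) [Nonempty V] (ℓ : ℕ) :
    G.IsSubdivModel (⊥ : SimpleGraph (Fin 1)) ℓ := by
  obtain ⟨v₀⟩ := ‹Nonempty V›
  exact ⟨⟨fun _ => v₀, fun a b _ => Subsingleton.elim a b⟩,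
    fun u v h => absurd h (by simp), fun u v h => absurd h (by simp),
    fun u v h => absurd h (by simp), fun u v u' v' h => absurd h (by simp)⟩

lemma ncard_le_comap_succAbove {n : ℕ} (M : SimpleGraph (Fin (n + 1))) (w : Fin (n + 1)) :
    M.edgeSet.ncard ≤ (M.comap (w.succAboveEmb)).edgeSet.ncard + n := by
  classical
  have hsub : M.edgeSet ⊆
      (Sym2.map (w.succAbove) '' (M.comap (w.succAboveEmb)).edgeSet) ∪
        ((fun a : Fin n => s(w, w.succAbove a)) '' Set.univ) := by
    rintro e he
    induction e with
    | _ x y =>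
      rw [mem_edgeSet] at he
      by_cases hx : x = w
      · subst hx
        obtain ⟨a, ha⟩ := Fin.exists_succAbove_eq (Ne.symm he.ne)
        refine Or.inr ⟨a, Set.mem_univ a, ?_⟩
        show s(x, x.succAbove a) = s(x, y)
        rw [ha]
      · by_cases hy : y = w
        · subst hy
          obtain ⟨a, ha⟩ := Fin.exists_succAbove_eq hx
          refine Or.inr ⟨a, Set.mem_univ a, ?_⟩
          show s(y, y.succAbove a) = s(x, y)
          rw [ha]
          exact Sym2.eq_swap
        · obtain ⟨a, ha⟩ := Fin.exists_succAbove_eq hx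
          obtain ⟨b, hb⟩ := Fin.exists_succAbove_eq hy
          refine Or.inl ⟨s(a, b), ?_, by rw [Sym2.map_pair_eq, ha, hb]⟩
          rw [mem_edgeSet, comap_adj]
          simp only [Fin.succAboveEmb, Function.Embedding.coeFn_mk]
          rwa [ha, hb]
  calc M.edgeSet.ncard ≤ _ := Set.ncard_le_ncard hsub (Set.toFinite _)
    _ ≤ (Sym2.map (w.succAbove) '' (M.comap (w.succAboveEmb)).edgeSet).ncard +
        ((fun a : Fin n => s(w, w.succAbove a)) '' Set.univ).ncard := Set.ncard_union_le _ _
    _ ≤ (M.comap (w.succAboveEmb)).edgeSet.ncard + n := by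
      gcongr
      · rw [Set.ncard_image_of_injective _ (Sym2.map.injective (Fin.succAbove_right_injective))]
      · calc ((fun a : Fin n => s(w, w.succAbove a)) '' Set.univ).ncard
            ≤ (Set.univ : Set (Fin n)).ncard := Set.ncard_image_le (Set.toFinite _)
          _ = n := by simp [Set.ncard_univ]



lemma sym2_pair_ne {α β : Type*} {f : α → β} (hf : Function.Injective f)
    {u v u' v' : α} (h : s(u, v) ≠ s(u', v')) : s(f u, f v) ≠ s(f u', f v') := fun hc =>
  h (Sym2.map.injective hf (by rwa [Sym2.map_pair_eq, Sym2.map_pair_eq]))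

lemma left_aux [Fintype V] [Nonempty V] (G : SimpleGraph V) (r : ℕ) :
    sSup (modelSet G r) < sSup (modelSet (G.addUniversal) r) := by
  classical
  have hBb : BddAbove (modelSet (G.addUniversal) r) :=
    (modelSet_finite (G.addUniversal) r).bddAbove
  obtain ⟨k, M, hM, hρ⟩ := (modelSet_nonempty G r).csSup_mem (modelSet_finite G r)
  rcases Nat.eq_zero_or_pos k with hk | hk
  · subst hk
    have h0 : sSup (modelSet G r) = 0 := by rw [hρ]; simp
    rw [h0]
    have hcount : (cone (⊥ : SimpleGraph (Fin 1))).edgeSet.ncard = 1 := by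
      rw [cone_edgeSet_ncard]; simp
    have hmem : ((cone (⊥ : SimpleGraph (Fin 1))).edgeSet.ncard : ℝ) / ((1 + 1 : ℕ) : ℝ) ∈
        modelSet (G.addUniversal) r :=
      ⟨1 + 1, cone ⊥, cone_model (trivial_model G (2 * r)), rfl⟩
    have := le_csSup hBb hmem
    rw [hcount] at this
    norm_num at this
    linarith
  · have hmlt : M.edgeSet.ncard < k * k := by
      have h1 := ncard_edgeSet_le M
      have h2 : k.choose 2 = k * (k - 1) / 2 := Nat.choose_two_right k
      have h3 : k * (k - 1) < k * k := mul_lt_mul_of_pos_left (by omega) hk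
      omega
    have hmem : ((cone M).edgeSet.ncard : ℝ) / ((k + 1 : ℕ) : ℝ) ∈
        modelSet (G.addUniversal) r :=
      ⟨k + 1, cone M, cone_model hM, rfl⟩
    refine lt_of_lt_of_le ?_ (le_csSup hBb hmem)
    rw [hρ, cone_edgeSet_ncard]
    have hk' : (0 : ℝ) < (k : ℝ) := by exact_mod_cast hk
    have hmlt' : (M.edgeSet.ncard : ℝ) < (k : ℝ) * (k : ℝ) := by exact_mod_cast hmlt
    rw [div_lt_div_iff₀ hk' (by push_cast; linarith)]
    push_cast
    nlinarith

lemma right_aux [Fintype V] (G : SimpleGraph V) (r : ℕ) {k : ℕ} {M : SimpleGraph (Fin k)}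
    (hM : (G.addUniversal).IsSubdivModel M (2 * r)) :
    (M.edgeSet.ncard : ℝ) / (k : ℝ) < sSup (modelSet G r) + 1 := by
  classical
  have hAb : BddAbove (modelSet G r) := (modelSet_finite G r).bddAbove
  have hA0 : (0 : ℝ) ≤ sSup (modelSet G r) := le_csSup hAb (zero_mem_modelSet G r)
  have hsomeinj : Function.Injective (someHom G : V → Option V) := Option.some_injective V
  have hrev : ∀ a b : V, (G.addUniversal).Adj (someHom G a) (someHom G b) → G.Adj a b := by
    intro a b h
    exact (addUniversal_adj_some_some G a b).mp h
  by_cases hm0 : M.edgeSet.ncard = 0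
  · rw [hm0]
    push_cast
    rw [zero_div]
    linarith
  obtain ⟨u₀, v₀, he⟩ : ∃ a b, M.Adj a b := by
    obtain ⟨e, hee⟩ := Set.nonempty_of_ncard_ne_zero hm0
    induction e with
    | _ a b => exact ⟨a, b, hee⟩
  have hk2 : 2 ≤ k := by
    have : 1 < Fintype.card (Fin k) := Fintype.one_lt_card_iff.mpr ⟨u₀, v₀, he.ne⟩
    simp at this; omega
  obtain ⟨φ, P, h1, h2, h3⟩ := hM
  by_cases hw : ∃ w, φ w = none
  · -- the universal vertex is a branch vertex; delete it
    obtain ⟨w, hwnone⟩ := hw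
    obtain ⟨n, rfl⟩ : ∃ n, k = n + 1 := ⟨k - 1, by omega⟩
    have hP'none : ∀ (u v : Fin n) (h : (M.comap (w.succAboveEmb)).Adj u v) (z : Option V),
        z ∈ (P (w.succAbove u) (w.succAbove v) h).support → z ≠ none := by
      intro u v h z hz hzn
      subst hzn
      by_cases hzu : (none : Option V) = φ (w.succAbove u)
      · rw [← hwnone] at hzu
        exact Fin.succAbove_ne w u (φ.injective hzu.symm)
      · by_cases hzv : (none : Option V) = φ (w.succAbove v)
        · rw [← hwnone] at hzv
          exact Fin.succAbove_ne w v (φ.injective hzv.symm)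
        · exact h2 _ _ h none hz hzu hzv ⟨w, hwnone⟩
    have hmod : G.IsSubdivModel (M.comap (w.succAboveEmb)) (2 * r) := by
      refine model_pull (someHom G) hsomeinj hrev ((w.succAboveEmb).trans φ)
        (fun u v h => P (w.succAbove u) (w.succAbove v) h)
        (fun u v h => h1 _ _ h) ?_ ?_ ?_ ?_
      · intro u v h x hx hxu hxv hxr
        obtain ⟨j, rfl⟩ := hxr
        exact h2 _ _ h _ hx hxu hxv ⟨w.succAbove j, rfl⟩
      · intro u v u' v' h h' hne x hx hx'
        exact h3 _ _ _ _ h h' (sym2_pair_ne (Fin.succAbove_right_injective) hne) x hx hx'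
      · intro i
        have : φ (w.succAbove i) ≠ none := by
          intro hc
          rw [← hwnone] at hc
          exact Fin.succAbove_ne w i (φ.injective hc)
        obtain ⟨a, ha⟩ := Option.ne_none_iff_exists.mp this
        exact ⟨a, ha⟩
      · intro u v h z hz
        obtain ⟨a, ha⟩ := Option.ne_none_iff_exists.mp (hP'none u v h z hz)
        exact ⟨a, ha⟩
    have hmem : ((M.comap (w.succAboveEmb)).edgeSet.ncard : ℝ) / ((n : ℕ) : ℝ) ∈
        modelSet G r := ⟨n, M.comap (w.succAboveEmb), hmod, rfl⟩
    have hle := le_csSup hAb hmem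
    have hcount := ncard_le_comap_succAbove M w
    have hn1 : 1 ≤ n := by omega
    set m := M.edgeSet.ncard
    set m₀ := (M.comap (w.succAboveEmb)).edgeSet.ncard
    have hc1 : (m : ℝ) ≤ (m₀ : ℝ) + (n : ℝ) := by exact_mod_cast hcount
    have hn1' : (1 : ℝ) ≤ (n : ℝ) := by exact_mod_cast hn1
    have hkey : (m : ℝ) / ((n : ℝ) + 1) < (m₀ : ℝ) / (n : ℝ) + 1 := by
      rw [div_lt_iff₀ (by linarith : (0 : ℝ) < (n : ℝ) + 1)]
      have e1 : (m₀ : ℝ) / (n : ℝ) * (n : ℝ) = (m₀ : ℝ) :=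
        div_mul_cancel₀ _ (by linarith)
      have e2 : (0 : ℝ) ≤ (m₀ : ℝ) / (n : ℝ) := by positivity
      nlinarith
    push_cast
    push_cast at hkey
    linarith
  · push_neg at hw
    by_cases hint : ∃ u, ∃ v, ∃ h : M.Adj u v, none ∈ (P u v h).support
    · -- the universal vertex is internal to one path; delete that edge
      obtain ⟨u₁, v₁, h₁, hmem₁⟩ := hint
      have hP'none : ∀ (u v : Fin k) (h : M.Adj u v), s(u, v) ≠ s(u₁, v₁) →
          ∀ z ∈ (P u v h).support, z ≠ none := by
        intro u v h hne z hz hzn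
        subst hzn
        rcases (h3 u v u₁ v₁ h h₁ hne none hz hmem₁).1 with hc | hc
        · exact hw u hc.symm
        · exact hw v hc.symm
      have hmod : G.IsSubdivModel (M.deleteEdges {s(u₁, v₁)}) (2 * r) := by
        refine model_pull (someHom G) hsomeinj hrev φ
          (fun u v h => P u v (deleteEdges_adj.mp h).1)
          (fun u v h => h1 _ _ _) ?_ ?_ ?_ ?_
        · intro u v h x hx hxu hxv
          exact h2 _ _ _ x hx hxu hxv
        · intro u v u' v' h h' hne x hx hx'
          exact h3 _ _ _ _ _ _ hne x hx hx'
        · intro i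
          obtain ⟨a, ha⟩ := Option.ne_none_iff_exists.mp (fun hc => hw i hc)
          exact ⟨a, ha⟩
        · intro u v h z hz
          have hne : s(u, v) ≠ s(u₁, v₁) := by
            have := (deleteEdges_adj.mp h).2
            simpa using this
          obtain ⟨a, ha⟩ :=
            Option.ne_none_iff_exists.mp (hP'none u v (deleteEdges_adj.mp h).1 hne z hz)
          exact ⟨a, ha⟩
      have hmem : (((M.deleteEdges {s(u₁, v₁)}).edgeSet.ncard : ℕ) : ℝ) / ((k : ℕ) : ℝ) ∈
          modelSet G r := ⟨k, M.deleteEdges {s(u₁, v₁)}, hmod, rfl⟩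
      have hle := le_csSup hAb hmem
      have hcount : (M.deleteEdges {s(u₁, v₁)}).edgeSet.ncard = M.edgeSet.ncard - 1 := by
        rw [edgeSet_deleteEdges]
        exact Set.ncard_diff_singleton_of_mem ((mem_edgeSet M).mpr h₁)
      have hm1 : 1 ≤ M.edgeSet.ncard := by omega
      set m := M.edgeSet.ncard
      have hms : (M.deleteEdges {s(u₁, v₁)}).edgeSet.ncard = m - 1 := hcount
      rw [hms] at hle
      have hcast : ((m - 1 : ℕ) : ℝ) = (m : ℝ) - 1 := by
        push_cast [hm1]
        ring
      rw [hcast] at hle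
      have hk' : (2 : ℝ) ≤ (k : ℝ) := by exact_mod_cast hk2
      have hkpos : (0 : ℝ) < (k : ℝ) := by linarith
      rw [div_lt_iff₀ hkpos]
      rw [div_le_iff₀ hkpos] at hle
      nlinarith [hA0]
    · -- the universal vertex is not used at all
      push_neg at hint
      have hmod : G.IsSubdivModel M (2 * r) := by
        refine model_pull (someHom G) hsomeinj hrev φ P h1 h2 h3 ?_ ?_
        · intro i
          obtain ⟨a, ha⟩ := Option.ne_none_iff_exists.mp (fun hc => hw i hc)
          exact ⟨a, ha⟩
        · intro u v h z hz
          have : z ≠ none := fun hc => hint u v h (hc ▸ hz)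
          obtain ⟨a, ha⟩ := Option.ne_none_iff_exists.mp this
          exact ⟨a, ha⟩
      have hle := le_csSup hAb ⟨k, M, hmod, rfl⟩
      linarith

end TopGradAux

/-- For every finite graph `G` with at least one vertex and every `r ≥ 0`,
`∇̃_r(G) < ∇̃_r(G ⋆ K₁) < ∇̃_r(G) + 1`. -/
theorem topGrad_addUniversal_strict {V : Type*} [Fintype V] [Nonempty V]
    (G : SimpleGraph V) (r : ℕ) :
    G.topGrad r < (G.addUniversal).topGrad r ∧
      (G.addUniversal).topGrad r < G.topGrad r + 1 := by
  classical
  constructor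
  · exact TopGradAux.left_aux G r
  · rw [TopGradAux.topGrad_eq, TopGradAux.topGrad_eq]
    obtain ⟨k, M, hM, hρ⟩ :=
      (TopGradAux.modelSet_nonempty (G.addUniversal) r).csSup_mem
        (TopGradAux.modelSet_finite (G.addUniversal) r)
    rw [hρ]
    exact TopGradAux.right_aux G r hM
end

section
/- Let α ≥ 2 be a real number and let G be a graph on n vertices such that for every integer d ≥ 1 the number of vertices of G of degree at least d is at most n / d^α. Then for every nonempty vertex set X ⊆ V(G) with |X| = k ≤ n, the degree sum satisfies Σ_{v ∈ X} deg_G(v) ≤ 3 · n^{1/α} · k^{(α−1)/α}. -/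
open Finset

lemma aux_sum_inv_sq (D : ℕ) (hD : 1 ≤ D) : ∀ n : ℕ, D ≤ n →
    ∑ d ∈ Finset.Ioc D n, (1:ℝ)/(d:ℝ)^2 ≤ 1/(D:ℝ) - 1/(n:ℝ) := by
  intro n
  induction n with
  | zero => intro h; omega
  | succ n ih =>
    intro h
    rcases eq_or_lt_of_le h with h' | h'
    · simp [← h']
    · have hDn : D ≤ n := by omega
      have hn1 : (1:ℝ) ≤ (n:ℝ) := by exact_mod_cast hD.trans hDn
      have hn0 : (0:ℝ) < n := by linarith
      rw [Finset.sum_Ioc_succ_top hDn]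
      have key : 1/(n:ℝ) - 1/((n:ℝ)+1) ≥ 1/((n:ℝ)+1)^2 := by
        rw [div_sub_div _ _ (ne_of_gt hn0) (by positivity)]
        rw [ge_iff_le, div_le_div_iff₀ (by positivity) (by positivity)]
        ring_nf
        nlinarith
      have := ih hDn
      push_cast
      linarith

lemma aux_sum_inv_rpow (α : ℝ) (hα : 2 ≤ α) (D n : ℕ) (hD : 1 ≤ D) :
    ∑ d ∈ Finset.Ioc D n, 1/(d:ℝ)^α ≤ (D:ℝ)^(1-α) := by
  have hD0 : (0:ℝ) < D := by exact_mod_cast hD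
  have hD1 : (1:ℝ) ≤ D := by exact_mod_cast hD
  have step : ∀ d ∈ Finset.Ioc D n, 1/(d:ℝ)^α ≤ (D:ℝ)^(2-α) * (1/(d:ℝ)^2) := by
    intro d hd
    rw [Finset.mem_Ioc] at hd
    have hd1 : (1:ℝ) ≤ (d:ℝ) := by exact_mod_cast hD.trans hd.1.le
    have hdD : (D:ℝ) ≤ (d:ℝ) := by exact_mod_cast hd.1.le
    have hpow : (d:ℝ)^2 * (D:ℝ)^(α-2) ≤ (d:ℝ)^α := by
      have h1 : (D:ℝ)^(α-2) ≤ (d:ℝ)^(α-2) :=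
        Real.rpow_le_rpow hD0.le hdD (by linarith)
      have h2 : (d:ℝ)^α = (d:ℝ)^2 * (d:ℝ)^(α-2) := by
        rw [← Real.rpow_two, ← Real.rpow_add (by linarith)]
        ring_nf
      rw [h2]
      have : (0:ℝ) ≤ (d:ℝ)^2 := by positivity
      nlinarith
    rw [div_le_iff₀ (by positivity)]
    have hne : (0:ℝ) < (d:ℝ)^2 := by positivity
    have hDa : (0:ℝ) < (D:ℝ)^(2-α) := Real.rpow_pos_of_pos hD0 _
    have hq : (D:ℝ)^(2-α) * (D:ℝ)^(α-2) = 1 := by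
      rw [← Real.rpow_add hD0]; simp
    calc (1:ℝ) = (D:ℝ)^(2-α) * (1/(d:ℝ)^2) * ((d:ℝ)^2 * (D:ℝ)^(α-2)) := by
          field_simp
          exact hq.symm
      _ ≤ (D:ℝ)^(2-α) * (1/(d:ℝ)^2) * (d:ℝ)^α := by
          apply mul_le_mul_of_nonneg_left hpow (by positivity)
  calc ∑ d ∈ Finset.Ioc D n, 1/(d:ℝ)^α
      ≤ ∑ d ∈ Finset.Ioc D n, (D:ℝ)^(2-α) * (1/(d:ℝ)^2) := Finset.sum_le_sum step
    _ = (D:ℝ)^(2-α) * ∑ d ∈ Finset.Ioc D n, (1:ℝ)/(d:ℝ)^2 := by rw [Finset.mul_sum]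
    _ ≤ (D:ℝ)^(2-α) * (1/(D:ℝ)) := by
        apply mul_le_mul_of_nonneg_left _ (Real.rpow_pos_of_pos hD0 _).le
        rcases le_or_gt D n with h | h
        · have := aux_sum_inv_sq D hD n h
          have hn0 : (0:ℝ) < n := by
            have : (1:ℝ) ≤ (n:ℝ) := by exact_mod_cast hD.trans h
            linarith
          have : (0:ℝ) ≤ 1/(n:ℝ) := by positivity
          linarith
        · rw [Finset.Ioc_eq_empty (by omega)]
          positivity
    _ = (D:ℝ)^(1-α) := by
        rw [one_div, ← Real.rpow_neg_one (D:ℝ), ← Real.rpow_add hD0]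
        ring_nf


/-- If a graph `G` on `n` vertices has, for every `d ≥ 1`, at most `n / d^α` vertices of degree
at least `d` (where `α ≥ 2`), then every nonempty set `X` of `k` vertices has degree sum at most
`3 · n^{1/α} · k^{(α−1)/α}`. -/
theorem degree_sum_tail_bound {V : Type*} [Fintype V] (G : SimpleGraph V)
    [DecidableRel G.Adj] (α : ℝ) (hα : 2 ≤ α)
    (htail : ∀ d : ℕ, 1 ≤ d →
      ((Finset.univ.filter fun v => d ≤ G.degree v).card : ℝ) ≤
        (Fintype.card V : ℝ) / (d : ℝ) ^ α) :
    ∀ X : Finset V, X.Nonempty →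
      (∑ v ∈ X, (G.degree v : ℝ)) ≤
        3 * (Fintype.card V : ℝ) ^ (1 / α) * (X.card : ℝ) ^ ((α - 1) / α) := by

  intro X hX
  set n := Fintype.card V with hn
  set k := X.card with hk
  have hα0 : (0:ℝ) < α := by linarith
  have hk1 : 1 ≤ k := hX.card_pos
  have hkn : k ≤ n := Finset.card_le_univ X
  have hn1 : 1 ≤ n := hk1.trans hkn
  have hk0 : (0:ℝ) < k := by exact_mod_cast hk1
  have hn0 : (0:ℝ) < n := by exact_mod_cast hn1
  have hnk1 : (1:ℝ) ≤ (n:ℝ)/(k:ℝ) := (one_le_div hk0).2 (by exact_mod_cast hkn)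
  set T : ℝ := ((n:ℝ)/(k:ℝ)) ^ (1/α) with hT
  have hT1 : 1 ≤ T := Real.one_le_rpow hnk1 (by positivity)
  set D : ℕ := ⌈T⌉₊ with hD
  have hD1 : 1 ≤ D := Nat.one_le_ceil_iff.2 (by linarith)
  have hTD : T ≤ (D:ℝ) := Nat.le_ceil T
  have hD2T : (D:ℝ) ≤ 2*T := by
    have := Nat.ceil_lt_add_one (by linarith : (0:ℝ) ≤ T)
    linarith
  -- step 1: rewrite degree sum
  have hdeg : ∀ v : V, G.degree v ≤ n := by
    intro v
    rw [← SimpleGraph.card_neighborFinset_eq_degree]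
    exact Finset.card_le_univ _
  have step1 : ∑ v ∈ X, G.degree v
      = ∑ d ∈ Finset.Ioc 0 n, (X.filter fun v => d ≤ G.degree v).card := by
    simp only [Finset.card_filter]
    rw [Finset.sum_comm]
    refine Finset.sum_congr rfl fun v _ => ?_
    rw [← Finset.sum_filter]
    have : (Finset.Ioc 0 n).filter (fun d => d ≤ G.degree v)
        = Finset.Ioc 0 (G.degree v) := by
      ext d
      simp only [Finset.mem_filter, Finset.mem_Ioc]
      have := hdeg v
      omega
    rw [this]
    simp
  -- bound each term
  have termbound : ∀ d : ℕ, 1 ≤ d →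
      ((X.filter fun v => d ≤ G.degree v).card : ℝ) ≤ (n:ℝ) / (d:ℝ)^α := by
    intro d hd
    refine le_trans ?_ (htail d hd)
    exact_mod_cast Finset.card_le_card
      (Finset.filter_subset_filter _ (Finset.subset_univ X))
  have termbound2 : ∀ d : ℕ,
      ((X.filter fun v => d ≤ G.degree v).card : ℝ) ≤ (k:ℝ) := by
    intro d
    exact_mod_cast Finset.card_le_card (Finset.filter_subset _ X)
  set f : ℕ → ℝ := fun d => ((X.filter fun v => d ≤ G.degree v).card : ℝ) with hf
  have key : ∑ d ∈ Finset.Ioc 0 n, f d ≤ (D:ℝ)*(k:ℝ) + (n:ℝ) * (D:ℝ)^(1-α) := by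
    have hpos : (0:ℝ) ≤ (n:ℝ) * (D:ℝ)^(1-α) := by positivity
    rcases le_or_gt D n with hDn | hDn
    · rw [← Finset.sum_Ioc_consecutive f (Nat.zero_le D) hDn]
      have h1 : ∑ d ∈ Finset.Ioc 0 D, f d ≤ (D:ℝ)*(k:ℝ) := by
        calc ∑ d ∈ Finset.Ioc 0 D, f d ≤ ∑ _d ∈ Finset.Ioc 0 D, (k:ℝ) :=
              Finset.sum_le_sum fun d _ => termbound2 d
          _ = (D:ℝ)*(k:ℝ) := by simp [mul_comm]
      have h2 : ∑ d ∈ Finset.Ioc D n, f d ≤ (n:ℝ) * (D:ℝ)^(1-α) := by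
        calc ∑ d ∈ Finset.Ioc D n, f d
            ≤ ∑ d ∈ Finset.Ioc D n, (n:ℝ) * (1/(d:ℝ)^α) := by
              refine Finset.sum_le_sum fun d hd => ?_
              rw [Finset.mem_Ioc] at hd
              have := termbound d (by omega)
              rw [mul_one_div]
              exact this
          _ = (n:ℝ) * ∑ d ∈ Finset.Ioc D n, 1/(d:ℝ)^α := by rw [Finset.mul_sum]
          _ ≤ (n:ℝ) * (D:ℝ)^(1-α) :=
              mul_le_mul_of_nonneg_left (aux_sum_inv_rpow α hα D n hD1) hn0.le
      linarith
    · have h1 : ∑ d ∈ Finset.Ioc 0 n, f d ≤ (n:ℝ)*(k:ℝ) := by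
        calc ∑ d ∈ Finset.Ioc 0 n, f d ≤ ∑ _d ∈ Finset.Ioc 0 n, (k:ℝ) :=
              Finset.sum_le_sum fun d _ => termbound2 d
          _ = (n:ℝ)*(k:ℝ) := by simp [mul_comm]
      have : (n:ℝ)*(k:ℝ) ≤ (D:ℝ)*(k:ℝ) := by
        have : (n:ℝ) ≤ (D:ℝ) := by exact_mod_cast hDn.le
        nlinarith
      linarith
  -- identities
  have e1 : T * (k:ℝ) = (n:ℝ)^(1/α) * (k:ℝ)^((α-1)/α) := by
    rw [hT, Real.div_rpow hn0.le hk0.le]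
    have h2 : (k:ℝ)^((α-1)/α) = (k:ℝ) / (k:ℝ)^(1/α) := by
      have : (α-1)/α = 1 - 1/α := by field_simp
      rw [this, Real.rpow_sub hk0, Real.rpow_one]
    rw [h2]
    field_simp
  have e2 : (n:ℝ) * T^(1-α) = (n:ℝ)^(1/α) * (k:ℝ)^((α-1)/α) := by
    rw [hT, ← Real.rpow_mul (le_of_lt (div_pos hn0 hk0))]
    have hc : (1/α)*(1-α) = (1-α)/α := by ring
    rw [hc, Real.div_rpow hn0.le hk0.le]
    have hn' : (n:ℝ) * (n:ℝ)^((1-α)/α) = (n:ℝ)^(1/α) := by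
      nth_rewrite 1 [← Real.rpow_one (n:ℝ)]
      rw [← Real.rpow_add hn0]
      congr 1
      field_simp
      ring
    have hk' : ((k:ℝ)^((1-α)/α))⁻¹ = (k:ℝ)^((α-1)/α) := by
      rw [← Real.rpow_neg hk0.le]
      congr 1
      ring
    rw [div_eq_mul_inv, ← mul_assoc, hn', hk']
  -- conclude
  have cast1 : ∑ v ∈ X, (G.degree v:ℝ) = ∑ d ∈ Finset.Ioc 0 n, f d := by
    rw [hf]
    norm_cast
    beta_reduce
    exact_mod_cast step1
  have hmono : (n:ℝ)*(D:ℝ)^(1-α) ≤ (n:ℝ)*T^(1-α) :=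
    mul_le_mul_of_nonneg_left
      (Real.rpow_le_rpow_of_nonpos (by linarith) hTD (by linarith)) hn0.le
  have hDk : (D:ℝ)*(k:ℝ) ≤ 2*T*(k:ℝ) := by nlinarith
  rw [cast1]
  calc ∑ d ∈ Finset.Ioc 0 n, f d ≤ (D:ℝ)*(k:ℝ) + (n:ℝ) * (D:ℝ)^(1-α) := key
    _ ≤ 2*T*(k:ℝ) + (n:ℝ)*T^(1-α) := by linarith
    _ = 3 * (n:ℝ)^(1/α) * (k:ℝ)^((α-1)/α) := by
        rw [mul_assoc 2 T, e1]
        rw [e2]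
        ring
end

section
/- For all integers n ≥ 1 and 0 ≤ k < n, the double factorials satisfy (n−k−1)!! / (n−1)!! ≤ (2e/n)^{k/2}, where e is Euler's number. -/
set_option linter.unreachableTactic false
set_option linter.unusedTactic false

open scoped Nat

/-- Lower bound: `(m/e)^(m/2) ≤ m‼`. -/
lemma dfact_ge (m : ℕ) : ((m:ℝ)/Real.exp 1) ^ ((m:ℝ)/2) ≤ (m‼ : ℝ) := by
  induction m using Nat.twoStepInduction with
  | zero => simp
  | one =>
    simp only [Nat.doubleFactorial, Nat.cast_one]
    apply Real.rpow_le_one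
    · positivity
    · rw [div_le_one (Real.exp_pos 1)]
      have := Real.add_one_le_exp (1:ℝ)
      linarith
    · norm_num
  | more m ih _ =>
    rw [Nat.doubleFactorial_add_two]
    push_cast
    have h2 : (0:ℝ) < (m:ℝ) + 2 := by positivity
    have key : (((m:ℝ)+2)/Real.exp 1) ^ (((m:ℝ)+2)/2)
        ≤ ((m:ℝ)+2) * (((m:ℝ))/Real.exp 1) ^ ((m:ℝ)/2) := by
      rcases Nat.eq_zero_or_pos m with hm | hm
      · subst hm
        norm_num
        rw [div_le_iff₀ (Real.exp_pos 1)]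
        nlinarith [Real.add_one_le_exp (1:ℝ)]
      · have hmR : (0:ℝ) < m := by exact_mod_cast hm
        have hsplit : (((m:ℝ)+2)/Real.exp 1) ^ (((m:ℝ)+2)/2)
            = (((m:ℝ)+2)/Real.exp 1) ^ ((m:ℝ)/2) * (((m:ℝ)+2)/Real.exp 1) := by
          rw [show ((m:ℝ)+2)/2 = (m:ℝ)/2 + 1 by ring, Real.rpow_add (by positivity),
            Real.rpow_one]
        rw [hsplit]
        have hb : ((m:ℝ)+2) ≤ (m:ℝ) * Real.exp (2/(m:ℝ)) := by
          have := Real.add_one_le_exp (2/(m:ℝ))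
          calc (m:ℝ)+2 = (m:ℝ) * (2/(m:ℝ) + 1) := by field_simp; ring
            _ ≤ (m:ℝ) * Real.exp (2/(m:ℝ)) := by
                apply mul_le_mul_of_nonneg_left this (le_of_lt hmR)
        have hpow : (((m:ℝ)+2)/Real.exp 1) ^ ((m:ℝ)/2)
            ≤ (((m:ℝ) * Real.exp (2/(m:ℝ)))/Real.exp 1) ^ ((m:ℝ)/2) :=
          Real.rpow_le_rpow (by positivity)
            ((div_le_div_iff_of_pos_right (Real.exp_pos 1)).mpr hb) (by positivity)
        calc (((m:ℝ)+2)/Real.exp 1) ^ ((m:ℝ)/2) * (((m:ℝ)+2)/Real.exp 1)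
            ≤ (((m:ℝ) * Real.exp (2/(m:ℝ)))/Real.exp 1) ^ ((m:ℝ)/2) * (((m:ℝ)+2)/Real.exp 1) := by
              apply mul_le_mul_of_nonneg_right hpow (by positivity)
          _ = ((m:ℝ)/Real.exp 1) ^ ((m:ℝ)/2) * (Real.exp (2/(m:ℝ))) ^ ((m:ℝ)/2)
                * (((m:ℝ)+2)/Real.exp 1) := by
              rw [show ((m:ℝ) * Real.exp (2/(m:ℝ)))/Real.exp 1
                  = ((m:ℝ)/Real.exp 1) * Real.exp (2/(m:ℝ)) by ring,
                Real.mul_rpow (by positivity) (by positivity)]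
          _ = ((m:ℝ)/Real.exp 1) ^ ((m:ℝ)/2) * Real.exp 1 * (((m:ℝ)+2)/Real.exp 1) := by
              rw [← Real.exp_mul, show (2/(m:ℝ)) * ((m:ℝ)/2) = 1 by field_simp]
          _ = ((m:ℝ)+2) * ((m:ℝ)/Real.exp 1) ^ ((m:ℝ)/2) := by
              field_simp
    calc (((m:ℝ)+2)/Real.exp 1) ^ (((m:ℝ)+2)/2)
        ≤ ((m:ℝ)+2) * (((m:ℝ))/Real.exp 1) ^ ((m:ℝ)/2) := key
      _ ≤ ((m:ℝ)+2) * (m‼ : ℝ) := by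
          apply mul_le_mul_of_nonneg_left ih (by positivity)

/-- Upper bound: `j‼ ≤ (j+1)^((j+1)/2)`. -/
lemma dfact_le (j : ℕ) : (j‼ : ℝ) ≤ ((j:ℝ)+1) ^ (((j:ℝ)+1)/2) := by
  induction j using Nat.twoStepInduction with
  | zero => simp
  | one =>
    norm_num
  | more j ih _ =>
    rw [Nat.doubleFactorial_add_two]
    push_cast
    have h3 : (0:ℝ) < (j:ℝ)+3 := by positivity
    have hsplit : ((j:ℝ)+2+1) ^ (((j:ℝ)+2+1)/2)
        = ((j:ℝ)+3) ^ (((j:ℝ)+1)/2) * ((j:ℝ)+3) := by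
      rw [show ((j:ℝ)+2+1) = (j:ℝ)+3 by ring,
        show ((j:ℝ)+3)/2 = ((j:ℝ)+1)/2 + 1 by ring, Real.rpow_add h3, Real.rpow_one]
    rw [hsplit]
    have h1 : ((j:ℝ)+1) ^ (((j:ℝ)+1)/2) ≤ ((j:ℝ)+3) ^ (((j:ℝ)+1)/2) :=
      Real.rpow_le_rpow (by positivity) (by linarith) (by positivity)
    calc ((j:ℝ)+2) * (j‼:ℝ) ≤ ((j:ℝ)+3) * (((j:ℝ)+1) ^ (((j:ℝ)+1)/2)) := by
          apply mul_le_mul (by linarith) ih (by positivity) (by positivity)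
      _ ≤ ((j:ℝ)+3) * (((j:ℝ)+3) ^ (((j:ℝ)+1)/2)) := by
          apply mul_le_mul_of_nonneg_left h1 (by positivity)
      _ = ((j:ℝ)+3) ^ (((j:ℝ)+1)/2) * ((j:ℝ)+3) := by ring

/-- `((j+2)/(2e)) * (j‼)^2 ≤ ((j+1)‼)^2`. -/
lemma dfact_ratio_sq (j : ℕ) :
    ((j:ℝ)+2)/(2*Real.exp 1) * (j‼:ℝ)^2 ≤ (((j+1)‼ : ℕ):ℝ)^2 := by
  induction j using Nat.twoStepInduction with
  | zero =>
    norm_num [Nat.doubleFactorial]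
    rw [div_le_one (by positivity)]
    nlinarith [Real.add_one_le_exp (1:ℝ)]
  | one =>
    norm_num [Nat.doubleFactorial]
    rw [div_le_iff₀ (by positivity)]
    nlinarith [Real.add_one_le_exp (1:ℝ)]
  | more j ih _ =>
    have e1 : ((j+2)‼ : ℝ) = ((j:ℝ)+2) * (j‼:ℝ) := by
      rw [Nat.doubleFactorial_add_two]; push_cast; ring
    have e2 : ((j+2+1)‼ : ℝ) = ((j:ℝ)+3) * (((j+1)‼ : ℕ):ℝ) := by
      rw [show j+2+1 = (j+1)+2 by ring, Nat.doubleFactorial_add_two]; push_cast; ring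
    push_cast
    push_cast at e1 e2
    rw [e1, e2]
    have key : ((j:ℝ)+2+2)/(2*Real.exp 1) * (((j:ℝ)+2) * (j‼:ℝ))^2
        = ((j:ℝ)+4)*((j:ℝ)+2) * (((j:ℝ)+2)/(2*Real.exp 1) * (j‼:ℝ)^2) := by
      field_simp
      ring
    rw [key]
    calc ((j:ℝ)+4)*((j:ℝ)+2) * (((j:ℝ)+2)/(2*Real.exp 1) * (j‼:ℝ)^2)
        ≤ ((j:ℝ)+4)*((j:ℝ)+2) * (((j+1)‼ : ℕ):ℝ)^2 := by
          apply mul_le_mul_of_nonneg_left ih (by positivity)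
      _ ≤ (((j:ℝ)+3) * (((j+1)‼ : ℕ):ℝ))^2 := by nlinarith [sq_nonneg (((j+1)‼ : ℕ):ℝ)]

/-- `log x ≤ x * log 2` for `x ≥ 2`. -/
lemma log_le_mul_log_two {x : ℝ} (hx : 2 ≤ x) : Real.log x ≤ x * Real.log 2 := by
  have hx0 : (0:ℝ) < x := by linarith
  have h1 : Real.log x = Real.log (x/2) + Real.log 2 := by
    rw [← Real.log_mul (by positivity) (by norm_num)]
    norm_num
  have h2' : Real.log (x/2) ≤ x/2 - 1 := by
    have := Real.log_le_sub_one_of_pos (show (0:ℝ) < x/2 by positivity)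
    linarith
  have hl2 : (1:ℝ)/2 ≤ Real.log 2 := by
    have := Real.log_two_gt_d9
    linarith
  nlinarith

/-- `(x/(2e))^(x/2) ≤ ((x-1)/e)^((x-1)/2)` for real `x ≥ 2`. -/
lemma direct_bound {x : ℝ} (hx : 2 ≤ x) :
    (x/(2*Real.exp 1)) ^ (x/2) ≤ ((x-1)/Real.exp 1) ^ ((x-1)/2) := by
  have he : (0:ℝ) < Real.exp 1 := Real.exp_pos 1
  have hx0 : (0:ℝ) < x := by linarith
  have hx1 : (0:ℝ) < x - 1 := by linarith
  have hb1 : (0:ℝ) < x/(2*Real.exp 1) := by positivity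
  have hb2 : (0:ℝ) < (x-1)/Real.exp 1 := by positivity
  rw [← Real.log_le_log_iff (Real.rpow_pos_of_pos hb1 _) (Real.rpow_pos_of_pos hb2 _),
    Real.log_rpow hb1, Real.log_rpow hb2]
  have l1 : Real.log (x/(2*Real.exp 1)) = Real.log x - Real.log 2 - 1 := by
    rw [Real.log_div (ne_of_gt hx0) (by positivity), Real.log_mul (by norm_num) (ne_of_gt he),
      Real.log_exp]
    ring
  have l2 : Real.log ((x-1)/Real.exp 1) = Real.log (x-1) - 1 := by
    rw [Real.log_div (ne_of_gt hx1) (ne_of_gt he), Real.log_exp]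
  rw [l1, l2]
  have h5 : (x-1) * (1/(x-1)) = 1 := by field_simp
  have h3 : Real.log x - Real.log (x-1) ≤ 1/(x-1) := by
    rw [← Real.log_div (ne_of_gt hx0) (ne_of_gt hx1)]
    have h := Real.log_le_sub_one_of_pos (show (0:ℝ) < x/(x-1) by positivity)
    have hxx : x/(x-1) - 1 = 1/(x-1) := by field_simp; ring
    linarith [hxx ▸ h]
  have h3' : (x-1)*(Real.log x - Real.log (x-1)) ≤ 1 := by
    have := mul_le_mul_of_nonneg_left h3 hx1.le
    rw [h5] at this
    exact this
  have h4 : Real.log x ≤ x * Real.log 2 := log_le_mul_log_two hx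
  nlinarith [h3', h4]

/-- Key multiplicative form: `j‼ * (n/(2e))^(k/2) ≤ (j+k)‼` with `n = j+k+1`. -/
lemma dfact_key (k : ℕ) : ∀ j : ℕ,
    (j‼ : ℝ) * (((j:ℝ)+(k:ℝ)+1)/(2*Real.exp 1)) ^ ((k:ℝ)/2) ≤ ((j+k)‼ : ℝ) := by
  induction k using Nat.twoStepInduction with
  | zero => intro j; simp
  | one =>
    intro j
    have h := dfact_ratio_sq j
    push_cast
    have ha : (0:ℝ) ≤ (j‼:ℝ) * (((j:ℝ)+1+1)/(2*Real.exp 1)) ^ ((1:ℝ)/2) := by positivity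
    have hb : (0:ℝ) ≤ (((j+1)‼:ℕ):ℝ) := by positivity
    have hsq : ((j‼:ℝ) * (((j:ℝ)+1+1)/(2*Real.exp 1)) ^ ((1:ℝ)/2))^2
        ≤ ((((j+1)‼:ℕ):ℝ))^2 := by
      have hrw : ((((j:ℝ)+1+1)/(2*Real.exp 1)) ^ ((1:ℝ)/2))^2
          = ((j:ℝ)+2)/(2*Real.exp 1) := by
        rw [← Real.rpow_natCast ((((j:ℝ)+1+1)/(2*Real.exp 1)) ^ ((1:ℝ)/2)) 2,
          ← Real.rpow_mul (by positivity)]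
        norm_num
        ring
      rw [mul_pow, hrw]
      calc (j‼:ℝ)^2 * (((j:ℝ)+2)/(2*Real.exp 1))
          = ((j:ℝ)+2)/(2*Real.exp 1) * (j‼:ℝ)^2 := by ring
        _ ≤ ((((j+1)‼:ℕ)):ℝ)^2 := h
    have hle := Real.sqrt_le_sqrt hsq
    rwa [Real.sqrt_sq ha, Real.sqrt_sq hb] at hle
  | more k' ih _ =>
    intro j
    push_cast
    have e1 : ((j+2)‼ : ℝ) = ((j:ℝ)+2) * (j‼:ℝ) := by
      rw [Nat.doubleFactorial_add_two]; push_cast; ring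
    have hjk : j + (k'+2) = (j+2) + k' := by omega
    rw [hjk]
    have hnpos : (0:ℝ) < ((j:ℝ)+((k':ℝ)+2)+1)/(2*Real.exp 1) := by positivity
    have hsplit : (((j:ℝ)+((k':ℝ)+2)+1)/(2*Real.exp 1)) ^ (((k':ℝ)+2)/2)
        = (((j:ℝ)+((k':ℝ)+2)+1)/(2*Real.exp 1)) ^ ((k':ℝ)/2)
          * (((j:ℝ)+((k':ℝ)+2)+1)/(2*Real.exp 1)) := by
      rw [show ((k':ℝ)+2)/2 = (k':ℝ)/2 + 1 by ring, Real.rpow_add hnpos, Real.rpow_one]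
    by_cases hc : ((j:ℝ)+((k':ℝ)+2)+1)/(2*Real.exp 1) ≤ (j:ℝ)+2
    · -- inductive step
      have ihj := ih (j+2)
      push_cast at ihj
      have hbase : ((j:ℝ)+2+(k':ℝ)+1) = ((j:ℝ)+((k':ℝ)+2)+1) := by ring
      rw [hbase] at ihj
      calc (j‼:ℝ) * (((j:ℝ)+((k':ℝ)+2)+1)/(2*Real.exp 1)) ^ (((k':ℝ)+2)/2)
          = (j‼:ℝ) * (((j:ℝ)+((k':ℝ)+2)+1)/(2*Real.exp 1)) ^ ((k':ℝ)/2)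
            * (((j:ℝ)+((k':ℝ)+2)+1)/(2*Real.exp 1)) := by rw [hsplit]; ring
        _ ≤ (j‼:ℝ) * (((j:ℝ)+((k':ℝ)+2)+1)/(2*Real.exp 1)) ^ ((k':ℝ)/2) * ((j:ℝ)+2) := by
            apply mul_le_mul_of_nonneg_left hc (by positivity)
        _ = ((j+2)‼ : ℝ) * (((j:ℝ)+((k':ℝ)+2)+1)/(2*Real.exp 1)) ^ ((k':ℝ)/2) := by
            rw [e1]; ring
        _ ≤ (((j+2)+k')‼ : ℝ) := ihj
    · -- direct bound
      push_neg at hc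
      set x : ℝ := (j:ℝ)+((k':ℝ)+2)+1 with hx
      have hx2 : (2:ℝ) ≤ x := by
        have : (0:ℝ) ≤ (j:ℝ) := by positivity
        have : (0:ℝ) ≤ (k':ℝ) := by positivity
        simp only [hx]
        linarith [Nat.cast_nonneg (α := ℝ) j, Nat.cast_nonneg (α := ℝ) k']
      have hd1 : (j‼:ℝ) ≤ ((j:ℝ)+1) ^ (((j:ℝ)+1)/2) := dfact_le j
      have hd2 : ((j:ℝ)+1) ^ (((j:ℝ)+1)/2) ≤ (x/(2*Real.exp 1)) ^ (((j:ℝ)+1)/2) :=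
        Real.rpow_le_rpow (by positivity) (by linarith) (by positivity)
      have hcomb : (x/(2*Real.exp 1)) ^ (((j:ℝ)+1)/2) * (x/(2*Real.exp 1)) ^ (((k':ℝ)+2)/2)
          = (x/(2*Real.exp 1)) ^ (x/2) := by
        rw [← Real.rpow_add hnpos]
        congr 1
        simp only [hx]
        ring
      have hdir : (x/(2*Real.exp 1)) ^ (x/2) ≤ ((x-1)/Real.exp 1) ^ ((x-1)/2) :=
        direct_bound hx2
      have hge : ((x-1)/Real.exp 1) ^ ((x-1)/2) ≤ (((j+2)+k')‼ : ℝ) := by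
        have := dfact_ge ((j+2)+k')
        push_cast at this
        have hx1 : x - 1 = ((j:ℝ)+2+(k':ℝ)) := by simp only [hx]; ring
        rw [hx1]
        convert this using 3 <;> try ring
      calc (j‼:ℝ) * (x/(2*Real.exp 1)) ^ (((k':ℝ)+2)/2)
          ≤ (x/(2*Real.exp 1)) ^ (((j:ℝ)+1)/2) * (x/(2*Real.exp 1)) ^ (((k':ℝ)+2)/2) := by
            apply mul_le_mul_of_nonneg_right (hd1.trans hd2) (by positivity)
        _ = (x/(2*Real.exp 1)) ^ (x/2) := hcomb
        _ ≤ ((x-1)/Real.exp 1) ^ ((x-1)/2) := hdir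
        _ ≤ (((j+2)+k')‼ : ℝ) := hge

/-- For `1 ≤ n` and `k < n`, the double factorials satisfy
`(n−k−1)‼ / (n−1)‼ ≤ (2e/n)^{k/2}`. -/
theorem doubleFactorial_ratio_le (n k : ℕ) (hn : 1 ≤ n) (hk : k < n) :
    ((Nat.doubleFactorial (n - k - 1) : ℝ)) / (Nat.doubleFactorial (n - 1) : ℝ) ≤
      (2 * Real.exp 1 / n) ^ ((k : ℝ) / 2) := by
  set j := n - k - 1 with hj
  have hjk : j + k = n - 1 := by omega
  have hjkn : j + k + 1 = n := by omega
  have hcast : ((j:ℝ) + (k:ℝ) + 1) = (n:ℝ) := by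
    exact_mod_cast congrArg (Nat.cast (R := ℝ)) hjkn
  have key := dfact_key k j
  rw [hcast, hjk] at key
  have hnpos : (0:ℝ) < (n:ℝ) := by exact_mod_cast hn
  have hdfpos : (0:ℝ) < ((Nat.doubleFactorial (n-1) : ℕ):ℝ) := by
    exact_mod_cast Nat.doubleFactorial_pos (n-1)
  rw [div_le_iff₀ hdfpos]
  have hmul : ((n:ℝ)/(2*Real.exp 1)) * (2*Real.exp 1/(n:ℝ)) = 1 := by
    field_simp
  have h1 : ((n:ℝ)/(2*Real.exp 1))^((k:ℝ)/2) * ((2*Real.exp 1)/(n:ℝ))^((k:ℝ)/2) = 1 := by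
    rw [← Real.mul_rpow (by positivity) (by positivity), hmul, Real.one_rpow]
  calc ((j‼ : ℕ):ℝ)
      = (j‼:ℝ) * (((n:ℝ)/(2*Real.exp 1))^((k:ℝ)/2) * ((2*Real.exp 1)/(n:ℝ))^((k:ℝ)/2)) := by
        rw [h1, mul_one]
    _ = ((j‼:ℝ) * ((n:ℝ)/(2*Real.exp 1))^((k:ℝ)/2)) * ((2*Real.exp 1)/(n:ℝ))^((k:ℝ)/2) := by
        ring
    _ ≤ (((n-1)‼ : ℕ):ℝ) * ((2*Real.exp 1)/(n:ℝ))^((k:ℝ)/2) := by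
        apply mul_le_mul_of_nonneg_right key (by positivity)
    _ = (2*Real.exp 1/(n:ℝ))^((k:ℝ)/2) * (((n-1)‼ : ℕ):ℝ) := by ring
end

section
/- Let d₁, …, d_n be positive reals with m = Σ_{i=1}^n d_i, and let G = CL(d₁,…,d_n) be the Chung–Lu random graph with these weights. Then for every pair of distinct vertices s, t and every integer r ≥ 1, the probability that G contains a path from s to t with exactly r edges is at most d_s · d_t · (Σ_{i=1}^n d_i²)^{r−1} / m^r. -/
open MeasureTheory ProbabilityTheory

/-- `G` is a Chung–Lu random graph with weights `d`: the edge indicator events of the pairs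
`{i,j}` (`i < j`) are independent, and each pair `{i,j}` is an edge with probability
`min(1, dᵢ dⱼ / m)` where `m = Σᵢ dᵢ`. -/
def IsChungLu {Ω : Type*} [MeasurableSpace Ω] (μ : Measure Ω)
    {n : ℕ} (d : Fin n → ℝ) (G : Ω → SimpleGraph (Fin n)) : Prop :=
  iIndepSet (fun p : {p : Fin n × Fin n // p.1 < p.2} => {ω | (G ω).Adj p.1.1 p.1.2}) μ ∧
    ∀ p : {p : Fin n × Fin n // p.1 < p.2},
      μ {ω | (G ω).Adj p.1.1 p.1.2} =
        ENNReal.ofReal (min 1 (d p.1.1 * d p.1.2 / ∑ i, d i))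

namespace ChungLuAux

/-- getVert of a path is injective on indices up to the length. -/
lemma getVert_injOn {V : Type*} {G : SimpleGraph V} {u v : V} {p : G.Walk u v}
    (hp : p.IsPath) : ∀ i j, i ≤ p.length → j ≤ p.length →
      p.getVert i = p.getVert j → i = j := by
  induction p with
  | nil => intro i j hi hj _; simp at hi hj; omega
  | cons h q ih =>
    intro i j hi hj hij
    rw [SimpleGraph.Walk.cons_isPath_iff] at hp
    simp only [SimpleGraph.Walk.length_cons] at hi hj
    match i, j with
    | 0, 0 => rfl
    | 0, (m+1) =>
      exfalso
      apply hp.2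
      rw [SimpleGraph.Walk.mem_support_iff_exists_getVert]
      exact ⟨m, by simpa [SimpleGraph.Walk.getVert] using hij.symm, by omega⟩
    | (m+1), 0 =>
      exfalso
      apply hp.2
      rw [SimpleGraph.Walk.mem_support_iff_exists_getVert]
      exact ⟨m, by simpa [SimpleGraph.Walk.getVert] using hij, by omega⟩
    | (a+1), (b+1) =>
      have := ih hp.1 a b (by omega) (by omega) (by simpa [SimpleGraph.Walk.getVert] using hij)
      omega

variable {n : ℕ}

/-- The vertex sequence of a candidate path: `s`, then the values of `g`, then `t`. -/
def vseq (s t : Fin n) (r : ℕ) (g : Fin (r-1) → Fin n) (k : ℕ) : Fin n :=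
  if h : 1 ≤ k ∧ k ≤ r - 1 then g ⟨k - 1, by omega⟩ else if k = 0 then s else t

/-- Sorted pair, with a default for the diagonal. -/
def epair (d0 : {p : Fin n × Fin n // p.1 < p.2}) (a b : Fin n) :
    {p : Fin n × Fin n // p.1 < p.2} :=
  if hab : a < b then ⟨(a, b), hab⟩ else if hba : b < a then ⟨(b, a), hba⟩ else d0

lemma epair_cases (d0 : {p : Fin n × Fin n // p.1 < p.2}) {a b : Fin n} (hab : a ≠ b) :
    (epair d0 a b).1 = (a, b) ∨ (epair d0 a b).1 = (b, a) := by
  unfold epair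
  rcases lt_or_gt_of_ne hab with h | h
  · simp [h]
  · simp [h, lt_asymm h]

lemma epair_inj (d0 : {p : Fin n × Fin n // p.1 < p.2}) {a b c e : Fin n}
    (hab : a ≠ b) (hce : c ≠ e) (h : epair d0 a b = epair d0 c e) :
    (a = c ∧ b = e) ∨ (a = e ∧ b = c) := by
  have h1 := epair_cases d0 hab
  have h2 := epair_cases d0 hce
  have h' : (epair d0 a b).1 = (epair d0 c e).1 := by rw [h]
  rcases h1 with h1 | h1 <;> rcases h2 with h2 | h2 <;>
    rw [h1, h2, Prod.mk.injEq] at h' <;> tauto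

lemma mul_epair (d : Fin n → ℝ) (d0 : {p : Fin n × Fin n // p.1 < p.2}) {a b : Fin n}
    (hab : a ≠ b) : d (epair d0 a b).1.1 * d (epair d0 a b).1.2 = d a * d b := by
  rcases epair_cases d0 hab with h | h <;> rw [h] <;> ring

lemma adj_epair {Ω : Type*} (G : Ω → SimpleGraph (Fin n))
    (d0 : {p : Fin n × Fin n // p.1 < p.2}) {a b : Fin n} (hab : a ≠ b) :
    {ω | (G ω).Adj a b} =
      {ω | (G ω).Adj (epair d0 a b).1.1 (epair d0 a b).1.2} := by
  rcases epair_cases d0 hab with h | h <;> rw [h] <;> ext ω <;>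
    simp [SimpleGraph.adj_comm]

end ChungLuAux

open ChungLuAux in
/-- In the Chung–Lu random graph with positive weights `d₁,…,dₙ` and `m = Σᵢ dᵢ`, for distinct
vertices `s, t` and `r ≥ 1`, the probability that there is a path from `s` to `t` with exactly
`r` edges is at most `d_s·d_t·(Σᵢ dᵢ²)^{r−1} / m^r`. -/
theorem chunglu_path_prob {n : ℕ} (d : Fin n → ℝ) (hd : ∀ i, 0 < d i)
    {Ω : Type*} [MeasurableSpace Ω] (μ : Measure Ω) [IsProbabilityMeasure μ]
    (G : Ω → SimpleGraph (Fin n)) (hG : IsChungLu μ d G)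
    (s t : Fin n) (hst : s ≠ t) (r : ℕ) (hr : 1 ≤ r) :
    μ {ω | ∃ p : (G ω).Walk s t, p.IsPath ∧ p.length = r} ≤
      ENNReal.ofReal (d s * d t * (∑ i, d i ^ 2) ^ (r - 1) / (∑ i, d i) ^ r) := by
  classical
  obtain ⟨r', rfl⟩ : ∃ r', r = r' + 1 := ⟨r - 1, by omega⟩
  set m : ℝ := ∑ i, d i with hm
  have hm0 : 0 < m := Finset.sum_pos (fun i _ => hd i) ⟨s, Finset.mem_univ s⟩
  set d0 : {p : Fin n × Fin n // p.1 < p.2} :=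
    if h : s < t then ⟨(s, t), h⟩ else ⟨(t, s), lt_of_le_of_ne (not_lt.mp h) (Ne.symm hst)⟩
    with hd0
  set r := r' + 1 with hrdef
  -- the vertex sequence
  set v : (Fin r' → Fin n) → ℕ → Fin n := fun g => vseq s t r g with hv
  have hv0 : ∀ g, v g 0 = s := fun g => by simp [hv, vseq]
  have hvr : ∀ g, v g r = t := fun g => by
    simp only [hv, vseq]
    rw [dif_neg (by omega), if_neg (by omega)]
  have hvs : ∀ g (j : Fin r'), v g (j.1 + 1) = g j := by
    intro g j
    simp only [hv, vseq]
    rw [dif_pos ⟨by omega, by omega⟩]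
    exact congrArg g (Fin.ext (by simp))
  -- the events
  set A : (Fin r' → Fin n) → ℕ → Set Ω :=
    fun g i => {ω | (G ω).Adj (v g i) (v g (i + 1))} with hA
  set S : Finset (Fin r' → Fin n) :=
    Finset.univ.filter (fun g => Set.InjOn (v g) (Set.Iic r)) with hS
  -- Step 1: inclusion in the union
  have hsub : {ω | ∃ p : (G ω).Walk s t, p.IsPath ∧ p.length = r} ⊆
      ⋃ g ∈ S, ⋂ i ∈ Finset.range r, A g i := by
    rintro ω ⟨p, hp, hlen⟩
    set g : Fin r' → Fin n := fun j => p.getVert (j.1 + 1) with hg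
    have hveq : ∀ k ≤ r, v g k = p.getVert k := by
      intro k hk
      simp only [hv, vseq]
      split_ifs with h1 h2
      · show p.getVert (k - 1 + 1) = p.getVert k
        congr 1; omega
      · subst h2; exact (p.getVert_zero).symm
      · have hkr : k = r := by omega
        subst hkr
        rw [← hlen]
        exact (SimpleGraph.Walk.getVert_length p).symm
    refine Set.mem_biUnion (x := g) ?_ ?_
    · show g ∈ S
      rw [hS, Finset.mem_filter]
      refine ⟨Finset.mem_univ _, ?_⟩
      intro i hi j hj hij
      rw [hveq i hi, hveq j hj] at hij
      exact getVert_injOn hp i j (by rw [hlen]; exact hi) (by rw [hlen]; exact hj) hij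
    · simp only [Set.mem_iInter]
      intro i hi
      rw [Finset.mem_range] at hi
      show (G ω).Adj (v g i) (v g (i + 1))
      rw [hveq i (by omega), hveq (i + 1) (by omega)]
      exact p.adj_getVert_succ (by omega)
  -- Step 3 ingredient: bound for each injective tuple
  have hmeas : ∀ g ∈ S, μ (⋂ i ∈ Finset.range r, A g i) ≤
      ENNReal.ofReal (∏ i ∈ Finset.range r, (d (v g i) * d (v g (i + 1)) / m)) := by
    intro g hg
    rw [hS, Finset.mem_filter] at hg
    have hinjv := hg.2
    have hne : ∀ i < r, v g i ≠ v g (i + 1) := by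
      intro i hi h
      have := hinjv (by simp [Set.mem_Iic]; omega : i ∈ Set.Iic r)
        (by simp [Set.mem_Iic]; omega : i + 1 ∈ Set.Iic r) h
      omega
    set e : ℕ → {p : Fin n × Fin n // p.1 < p.2} :=
      fun i => epair d0 (v g i) (v g (i + 1)) with he
    have hinj : Set.InjOn e (Finset.range r : Set ℕ) := by
      intro i hi j hj hij
      simp only [Finset.coe_range, Set.mem_Iio] at hi hj
      rcases epair_inj d0 (hne i hi) (hne j hj) hij with ⟨h1, _⟩ | ⟨h1, h2⟩
      · have := hinjv (by simp [Set.mem_Iic]; omega : i ∈ Set.Iic r)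
          (by simp [Set.mem_Iic]; omega : j ∈ Set.Iic r) h1
        omega
      · have e1 := hinjv (by simp [Set.mem_Iic]; omega : i ∈ Set.Iic r)
          (by simp [Set.mem_Iic]; omega : j + 1 ∈ Set.Iic r) h1
        have e2 := hinjv (by simp [Set.mem_Iic]; omega : i + 1 ∈ Set.Iic r)
          (by simp [Set.mem_Iic]; omega : j ∈ Set.Iic r) h2
        omega
    have hAe : ⋂ i ∈ Finset.range r, A g i =
        ⋂ q ∈ (Finset.range r).image e, {ω | (G ω).Adj q.1.1 q.1.2} := by
      rw [Finset.set_biInter_finset_image]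
      exact Set.iInter₂_congr fun i hi =>
        adj_epair G d0 (hne i (Finset.mem_range.mp hi))
    rw [hAe, (hG.1).meas_biInter,
      Finset.prod_image (fun a ha b hb => hinj ha hb)]
    have hterm : ∀ i ∈ Finset.range r,
        μ {ω | (G ω).Adj (e i).1.1 (e i).1.2} ≤
          ENNReal.ofReal (d (v g i) * d (v g (i + 1)) / m) := by
      intro i hi
      rw [hG.2 (e i)]
      refine ENNReal.ofReal_le_ofReal ?_
      rw [← hm, mul_epair d d0 (hne i (Finset.mem_range.mp hi))]
      exact min_le_right _ _
    calc ∏ i ∈ Finset.range r, μ {ω | (G ω).Adj (e i).1.1 (e i).1.2}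
        ≤ ∏ i ∈ Finset.range r, ENNReal.ofReal (d (v g i) * d (v g (i + 1)) / m) :=
          Finset.prod_le_prod' hterm
      _ = ENNReal.ofReal (∏ i ∈ Finset.range r, (d (v g i) * d (v g (i + 1)) / m)) := by
          rw [ENNReal.ofReal_prod_of_nonneg]
          intro i _
          exact div_nonneg (mul_nonneg (hd _).le (hd _).le) hm0.le
  -- Step 5: the real computation
  have hreal : ∑ g : Fin r' → Fin n, ∏ i ∈ Finset.range r, (d (v g i) * d (v g (i + 1)) / m)
      = d s * d t * (∑ i, d i ^ 2) ^ r' / m ^ r := by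
    have hPg : ∀ g : Fin r' → Fin n,
        ∏ i ∈ Finset.range r, (d (v g i) * d (v g (i + 1)) / m)
          = (d s * d t * ∏ j : Fin r', d (g j) ^ 2) / m ^ r := by
      intro g
      rw [Finset.prod_div_distrib, Finset.prod_const, Finset.card_range]
      rw [Finset.prod_mul_distrib]
      have h1 : ∏ i ∈ Finset.range r, d (v g i)
          = (∏ i ∈ Finset.range r', d (v g (i + 1))) * d s := by
        rw [hrdef, Finset.prod_range_succ', hv0]
      have h2 : ∏ i ∈ Finset.range r, d (v g (i + 1))
          = (∏ i ∈ Finset.range r', d (v g (i + 1))) * d t := by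
        rw [hrdef, Finset.prod_range_succ, ← hrdef, hvr]
      have h3 : ∏ i ∈ Finset.range r', d (v g (i + 1)) = ∏ j : Fin r', d (g j) := by
        rw [← Fin.prod_univ_eq_prod_range (fun i => d (v g (i + 1))) r']
        exact Finset.prod_congr rfl fun j _ => by rw [hvs g j]
      have hsq : (∏ j : Fin r', d (g j)) * (∏ j : Fin r', d (g j))
          = ∏ j : Fin r', d (g j) ^ 2 := by
        rw [← Finset.prod_mul_distrib]
        exact Finset.prod_congr rfl fun j _ => (sq (d (g j))).symm
      rw [h1, h2, h3, ← hsq]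
      ring
    have hsum : ∑ g : Fin r' → Fin n, ∏ j : Fin r', d (g j) ^ 2 = (∑ i, d i ^ 2) ^ r' := by
      rw [Finset.sum_pow' Finset.univ (fun i => d i ^ 2) r', Fintype.piFinset_univ]
    simp only [hPg]
    rw [← Finset.sum_div, ← Finset.mul_sum, hsum]
  -- put everything together
  calc μ {ω | ∃ p : (G ω).Walk s t, p.IsPath ∧ p.length = r}
      ≤ μ (⋃ g ∈ S, ⋂ i ∈ Finset.range r, A g i) := measure_mono hsub
    _ ≤ ∑ g ∈ S, μ (⋂ i ∈ Finset.range r, A g i) := measure_biUnion_finset_le S _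
    _ ≤ ∑ g ∈ S, ENNReal.ofReal (∏ i ∈ Finset.range r, (d (v g i) * d (v g (i + 1)) / m)) :=
        Finset.sum_le_sum hmeas
    _ ≤ ∑ g : Fin r' → Fin n,
          ENNReal.ofReal (∏ i ∈ Finset.range r, (d (v g i) * d (v g (i + 1)) / m)) :=
        Finset.sum_le_sum_of_subset (Finset.subset_univ S)
    _ = ENNReal.ofReal (∑ g : Fin r' → Fin n,
          ∏ i ∈ Finset.range r, (d (v g i) * d (v g (i + 1)) / m)) := by
        rw [ENNReal.ofReal_sum_of_nonneg]
        intro g _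
        exact Finset.prod_nonneg fun i _ =>
          div_nonneg (mul_nonneg (hd _).le (hd _).le) hm0.le
    _ = ENNReal.ofReal (d s * d t * (∑ i, d i ^ 2) ^ r' / m ^ r) := by rw [hreal]
    _ = ENNReal.ofReal (d s * d t * (∑ i, d i ^ 2) ^ (r - 1) / (∑ i, d i) ^ r) := by
        rw [← hm]; norm_num [hrdef]
end

section
/- For every μ > 0 and every c ≥ 1, there exist a function f : ℕ → ℝ and a constant C such that for every n and every integer r ≥ 0, the Erdős–Rényi random graph G(n, μ/n) satisfies P[∇̃_r(G(n, μ/n)) ≥ f(r)] ≤ C·n^{−c}. That is, the Erdős–Rényi model with edge probability μ/n has bounded expansion with high probability. -/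
open MeasureTheory ProbabilityTheory SimpleGraph

/-- `G` is an Erdős–Rényi random graph `G(n, p)`: the edge indicator events of all pairs
`{i,j}` (`i < j`) are independent, each with probability `min 1 p`. -/
def IsErdosRenyi {Ω : Type*} [MeasurableSpace Ω] (μ : Measure Ω) {n : ℕ} (p : ℝ)
    (G : Ω → SimpleGraph (Fin n)) : Prop :=
  iIndepSet (fun q : {q : Fin n × Fin n // q.1 < q.2} =>
      {ω | (G ω).Adj q.1.1 q.1.2}) μ ∧
    ∀ q : {q : Fin n × Fin n // q.1 < q.2},
      μ {ω | (G ω).Adj q.1.1 q.1.2} = ENNReal.ofReal (min 1 p)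


namespace ERBE

/-- consecutive-pair edges of a list -/
def listEdges {α : Type*} (l : List α) : List (Sym2 α) :=
  l.zipWith (fun a b => s(a, b)) l.tail

@[simp] lemma listEdges_nil {α : Type*} : listEdges ([] : List α) = [] := rfl

lemma listEdges_cons_cons {α : Type*} (a b : α) (l : List α) :
    listEdges (a :: b :: l) = s(a, b) :: listEdges (b :: l) := rfl

lemma walk_listEdges {V : Type*} {G : SimpleGraph V} :
    ∀ {u v : V} (w : G.Walk u v), listEdges w.support = w.edges := by
  intro u v w
  induction w with
  | nil => rfl
  | cons h p ih =>
      rw [SimpleGraph.Walk.support_cons, SimpleGraph.Walk.edges_cons, ← ih]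
      rw [p.support_eq_cons]
      rfl

variable {n r : ℕ}

/-- Internal data of a path of a witness: number of internal vertices `j ≤ 2r`,
and the internal vertices. -/
abbrev PD (n r : ℕ) : Type := Σ j : Fin (2 * r + 1), (Fin (j : ℕ) → Fin n)

/-- The vertex list of the path encoded by endpoints `q` and internal data `d`. -/
def wList (q : Fin n × Fin n) (d : PD n r) : List (Fin n) :=
  q.1 :: (List.ofFn d.2 ++ [q.2])

/-- The edge set of the path encoded by `(q, d)`. -/
def pdE (q : Fin n × Fin n) (d : PD n r) : Finset (Sym2 (Fin n)) :=
  (listEdges (wList q d)).toFinset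

/-- All edges of a witness system. -/
def bigE (E' : Finset (Fin n × Fin n)) (g : {x // x ∈ E'} → PD n r) :
    Finset (Sym2 (Fin n)) :=
  E'.attach.biUnion fun q => pdE q.1 (g q)

/-- a witness is good if its paths have pairwise disjoint edge sets and no repeated
edges within a path. -/
def Good (E' : Finset (Fin n × Fin n)) (g : {x // x ∈ E'} → PD n r) : Prop :=
  (bigE E' g).card = ∑ q ∈ E'.attach, (((g q).1 : ℕ) + 1)

/-- The event that all edges of a good witness are present. -/
def EvG {Ω : Type} (G : Ω → SimpleGraph (Fin n)) (E' : Finset (Fin n × Fin n))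
    (g : {x // x ∈ E'} → PD n r) : Set Ω :=
  {ω | Good E' g ∧ ∀ e ∈ bigE E' g, e ∈ (G ω).edgeSet}

end ERBE

namespace ERBE

/-- canonical ordered representative of a Sym2 -/
def spr {n : ℕ} : Sym2 (Fin n) → Fin n × Fin n :=
  Sym2.lift ⟨fun a b => (min a b, max a b), by
    intro a b; simp [min_comm, max_comm]⟩

lemma spr_spec {n : ℕ} (e : Sym2 (Fin n)) (he : ¬ e.IsDiag) :
    (spr e).1 < (spr e).2 ∧ s((spr e).1, (spr e).2) = e := by
  induction e with
  | _ a b =>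
    rw [Sym2.mk_isDiag_iff] at he
    constructor
    · simpa [spr] using min_lt_max.2 he
    · show s(min a b, max a b) = s(a, b)
      rcases le_total a b with h | h
      · rw [min_eq_left h, max_eq_right h]
      · rw [min_eq_right h, max_eq_left h, Sym2.eq_swap]

/-- probability that a given finite set of potential edges is entirely present -/
lemma edge_event_bound {n : ℕ} {Ω : Type} [MeasurableSpace Ω] (μ : Measure Ω)
    [IsProbabilityMeasure μ] (p : ℝ) (G : Ω → SimpleGraph (Fin n))
    (hER : IsErdosRenyi μ p G) (U : Finset (Sym2 (Fin n))) :
    μ {ω | ∀ e ∈ U, e ∈ (G ω).edgeSet} ≤ ENNReal.ofReal (min 1 p) ^ U.card := by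
  by_cases hd : ∃ e ∈ U, e.IsDiag
  · obtain ⟨e, heU, hdiag⟩ := hd
    have : {ω | ∀ e ∈ U, e ∈ (G ω).edgeSet} = ∅ := by
      ext ω
      simp only [Set.mem_setOf_eq, Set.mem_empty_iff_false, iff_false, not_forall]
      refine ⟨e, heU, fun hmem => ?_⟩
      exact (SimpleGraph.not_isDiag_of_mem_edgeSet _ hmem) hdiag
    rw [this, measure_empty]
    exact zero_le
  · push_neg at hd
    -- map each edge to its ordered representative
    have hlt : ∀ e ∈ U, (spr e).1 < (spr e).2 := fun e he => (spr_spec e (hd e he)).1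
    set t : Finset {q : Fin n × Fin n // q.1 < q.2} :=
      U.attach.image (fun e => ⟨spr e.1, hlt e.1 e.2⟩) with ht
    have hinj : ∀ e ∈ U.attach, ∀ e' ∈ U.attach,
        (⟨spr e.1, hlt e.1 e.2⟩ : {q : Fin n × Fin n // q.1 < q.2}) = ⟨spr e'.1, hlt e'.1 e'.2⟩
          → e = e' := by
      intro e _ e' _ h
      have h2 : spr e.1 = spr e'.1 := congrArg Subtype.val h
      have := (spr_spec e.1 (hd e.1 e.2)).2
      have h3 := (spr_spec e'.1 (hd e'.1 e'.2)).2
      apply Subtype.ext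
      rw [← this, ← h3, h2]
    have hcard : t.card = U.card := by
      rw [ht, Finset.card_image_of_injOn hinj, Finset.card_attach]
    have hev : {ω | ∀ e ∈ U, e ∈ (G ω).edgeSet}
        = ⋂ q ∈ t, {ω | (G ω).Adj q.1.1 q.1.2} := by
      ext ω
      simp only [Set.mem_setOf_eq, Set.mem_iInter, ht, Finset.mem_image, Finset.mem_attach,
        true_and, Subtype.exists]
      constructor
      · rintro h q ⟨e, he, rfl⟩
        have h2 := (spr_spec e (hd e he)).2
        have := h e he
        rw [← h2] at this
        exact this
      · intro h e he
        have h2 := (spr_spec e (hd e he)).2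
        rw [← h2, SimpleGraph.mem_edgeSet]
        exact h _ ⟨e, he, rfl⟩
    rw [hev, hER.1.meas_biInter t]
    calc ∏ q ∈ t, μ {ω | (G ω).Adj q.1.1 q.1.2}
        = ∏ _q ∈ t, ENNReal.ofReal (min 1 p) := by
          exact Finset.prod_congr rfl fun q _ => hER.2 q
      _ = ENNReal.ofReal (min 1 p) ^ U.card := by rw [Finset.prod_const, hcard]
      _ ≤ ENNReal.ofReal (min 1 p) ^ U.card := le_rfl

end ERBE
namespace ERBE

lemma witness_bound {n r : ℕ} {Ω : Type} [MeasurableSpace Ω] (μ : Measure Ω)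
    [IsProbabilityMeasure μ] (p : ℝ) (G : Ω → SimpleGraph (Fin n))
    (hER : IsErdosRenyi μ p G) (E' : Finset (Fin n × Fin n))
    (g : {x // x ∈ E'} → PD n r) :
    μ (EvG G E' g) ≤ ∏ q ∈ E'.attach, ENNReal.ofReal (min 1 p) ^ (((g q).1 : ℕ) + 1) := by
  by_cases hg : Good E' g
  · calc μ (EvG G E' g) ≤ μ {ω | ∀ e ∈ bigE E' g, e ∈ (G ω).edgeSet} :=
          measure_mono fun ω hω => hω.2
      _ ≤ ENNReal.ofReal (min 1 p) ^ (bigE E' g).card := edge_event_bound μ p G hER _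
      _ = ∏ q ∈ E'.attach, ENNReal.ofReal (min 1 p) ^ (((g q).1 : ℕ) + 1) := by
          rw [hg, Finset.prod_pow_eq_pow_sum]
  · have : EvG G E' g = ∅ := by
      ext ω; simp only [EvG, Set.mem_setOf_eq, Set.mem_empty_iff_false, iff_false]
      exact fun h => hg h.1
    rw [this, measure_empty]
    exact zero_le

end ERBE
open scoped ENNReal
namespace ERBE

/-- The union of all witness events. -/
def BadSet {Ω : Type} {n : ℕ} (r s' : ℕ) (G : Ω → SimpleGraph (Fin n)) : Set Ω :=
  ⋃ k ∈ Finset.Icc 1 n, ⋃ S ∈ Finset.powersetCard k (Finset.univ : Finset (Fin n)),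
    ⋃ E' ∈ Finset.powersetCard (s' * k) (S ×ˢ S),
      ⋃ g ∈ (Finset.univ : Finset ({x // x ∈ E'} → PD n r)), EvG G E' g

lemma badset_bound {n r : ℕ} {Ω : Type} [MeasurableSpace Ω] (μ : Measure Ω)
    [IsProbabilityMeasure μ] (p : ℝ) (G : Ω → SimpleGraph (Fin n))
    (hER : IsErdosRenyi μ p G) (s' : ℕ) :
    μ (BadSet r s' G) ≤ ∑ k ∈ Finset.Icc 1 n,
      (n.choose k : ℝ≥0∞) * ((k * k).choose (s' * k) : ℝ≥0∞) *
        (∑ j ∈ Finset.range (2 * r + 1),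
          (n : ℝ≥0∞) ^ j * ENNReal.ofReal (min 1 p) ^ (j + 1)) ^ (s' * k) := by
  set W : ℝ≥0∞ := ∑ j ∈ Finset.range (2 * r + 1),
      (n : ℝ≥0∞) ^ j * ENNReal.ofReal (min 1 p) ^ (j + 1) with hW
  -- sum over all internal data
  have hsumPD : ∑ d : PD n r, ENNReal.ofReal (min 1 p) ^ ((d.1 : ℕ) + 1) = W := by
    rw [← Finset.univ_sigma_univ, Finset.sum_sigma]
    rw [hW, ← Fin.sum_univ_eq_sum_range
      (fun j => (n : ℝ≥0∞) ^ j * ENNReal.ofReal (min 1 p) ^ (j + 1))]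
    refine Finset.sum_congr rfl fun j _ => ?_
    show ∑ _s : Fin (j : ℕ) → Fin n, ENNReal.ofReal (min 1 p) ^ ((j : ℕ) + 1) = _
    rw [Finset.sum_const, Finset.card_univ]
    simp [Fintype.card_fun, mul_comm]
  refine le_trans (measure_biUnion_finset_le _ _) ?_
  refine Finset.sum_le_sum fun k hk => ?_
  refine le_trans (measure_biUnion_finset_le _ _) ?_
  calc ∑ S ∈ Finset.powersetCard k (Finset.univ : Finset (Fin n)),
        μ (⋃ E' ∈ Finset.powersetCard (s' * k) (S ×ˢ S),
          ⋃ g ∈ (Finset.univ : Finset ({x // x ∈ E'} → PD n r)), EvG G E' g)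
      ≤ ∑ _S ∈ Finset.powersetCard k (Finset.univ : Finset (Fin n)),
        ((k * k).choose (s' * k) : ℝ≥0∞) * W ^ (s' * k) := by
        refine Finset.sum_le_sum fun S hS => ?_
        have hScard : S.card = k := (Finset.mem_powersetCard.1 hS).2
        refine le_trans (measure_biUnion_finset_le _ _) ?_
        calc ∑ E' ∈ Finset.powersetCard (s' * k) (S ×ˢ S),
              μ (⋃ g ∈ (Finset.univ : Finset ({x // x ∈ E'} → PD n r)), EvG G E' g)
            ≤ ∑ _E' ∈ Finset.powersetCard (s' * k) (S ×ˢ S), W ^ (s' * k) := by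
              refine Finset.sum_le_sum fun E' hE' => ?_
              have hEcard : E'.card = s' * k := (Finset.mem_powersetCard.1 hE').2
              refine le_trans (measure_biUnion_finset_le _ _) ?_
              calc ∑ g ∈ (Finset.univ : Finset ({x // x ∈ E'} → PD n r)), μ (EvG G E' g)
                  ≤ ∑ g ∈ (Finset.univ : Finset ({x // x ∈ E'} → PD n r)),
                      ∏ q ∈ E'.attach, ENNReal.ofReal (min 1 p) ^ (((g q).1 : ℕ) + 1) :=
                    Finset.sum_le_sum fun g _ => witness_bound μ p G hER E' g
                _ = W ^ (s' * k) := by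
                    rw [← Finset.univ_eq_attach]
                    have := (Finset.prod_univ_sum (fun _ : {x // x ∈ E'} =>
                      (Finset.univ : Finset (PD n r)))
                      (fun _q d => ENNReal.ofReal (min 1 p) ^ ((d.1 : ℕ) + 1))).symm
                    rw [Fintype.piFinset_univ] at this
                    rw [this, Finset.prod_const, hsumPD, Finset.card_univ,
                      Fintype.card_coe, hEcard]
          _ = ((k * k).choose (s' * k) : ℝ≥0∞) * W ^ (s' * k) := by
              rw [Finset.sum_const, Finset.card_powersetCard, Finset.card_product, hScard,
                nsmul_eq_mul]
    _ = (n.choose k : ℝ≥0∞) * (((k * k).choose (s' * k) : ℝ≥0∞) * W ^ (s' * k)) := by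
        rw [Finset.sum_const, Finset.card_powersetCard, Finset.card_univ, Fintype.card_fin,
          nsmul_eq_mul]
    _ = (n.choose k : ℝ≥0∞) * ((k * k).choose (s' * k) : ℝ≥0∞) * W ^ (s' * k) := by ring

end ERBE
namespace ERBE

lemma getLast_eq_of_eq {α : Type*} {l l' : List α} (h : l = l') (h1 : l ≠ []) (h2 : l' ≠ []) :
    l.getLast h1 = l'.getLast h2 := by subst h; rfl

lemma zero_mem_grads {V : Type*} (G : SimpleGraph V) (r : ℕ) :
    (0 : ℝ) ∈ {ρ : ℝ | ∃ (k : ℕ) (M : SimpleGraph (Fin k)),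
      G.IsSubdivModel M (2 * r) ∧ ρ = (M.edgeSet.ncard : ℝ) / k} := by
  refine ⟨0, ⊥, ⟨⟨fun a => a.elim0, fun a => a.elim0⟩, fun u => u.elim0,
    fun u => u.elim0, fun u => u.elim0, fun u => u.elim0⟩, by norm_num⟩

lemma event_subset_badset {n r s' : ℕ} {Ω : Type} (G : Ω → SimpleGraph (Fin n)) :
    {ω | (s' : ℝ) + 1 ≤ (G ω).topGrad r} ⊆ BadSet r s' G := by
  intro ω hω
  have hω' : (s' : ℝ) + 1 ≤ (G ω).topGrad r := hω
  rw [SimpleGraph.topGrad] at hω'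
  have hne : Set.Nonempty {ρ : ℝ | ∃ (k : ℕ) (M : SimpleGraph (Fin k)),
      (G ω).IsSubdivModel M (2 * r) ∧ ρ = (M.edgeSet.ncard : ℝ) / k} :=
    ⟨0, zero_mem_grads _ r⟩
  obtain ⟨ρ, hρmem, hρ⟩ := exists_lt_of_lt_csSup hne
    (lt_of_lt_of_le (by linarith : (s' : ℝ) < (s' : ℝ) + 1) hω')
  obtain ⟨k, M, hmodel, rfl⟩ := hρmem
  have hk : k ≠ 0 := by
    rintro rfl
    rw [Nat.cast_zero, div_zero] at hρ
    exact absurd hρ (not_lt.2 (Nat.cast_nonneg _))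
  have hcount : s' * k < M.edgeSet.ncard := by
    have hkpos : (0 : ℝ) < (k : ℝ) := by positivity
    rw [lt_div_iff₀ hkpos] at hρ
    exact_mod_cast hρ
  obtain ⟨φ, P, hPath, hInt, hDisj⟩ := hmodel
  have hkn : k ≤ n := by
    have := Fintype.card_le_of_embedding φ
    simpa using this
  -- choose s' * k edges of M
  have hF₀ : (M.edgeSet.toFinite.toFinset).card = M.edgeSet.ncard :=
    (Set.ncard_eq_toFinset_card _ _).symm
  obtain ⟨F₁, hF₁sub, hF₁card⟩ := Finset.exists_subset_card_eq
    (show s' * k ≤ (M.edgeSet.toFinite.toFinset).card by omega)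
  have hmemE : ∀ ε : {x // x ∈ F₁}, (ε : Sym2 (Fin k)) ∈ M.edgeSet :=
    fun ε => (Set.Finite.mem_toFinset _).1 (hF₁sub ε.2)
  have hex : ∀ ε : {x // x ∈ F₁}, ∃ pq : Fin k × Fin k,
      M.Adj pq.1 pq.2 ∧ (ε : Sym2 (Fin k)) = s(pq.1, pq.2) := by
    rintro ⟨ε, hε⟩
    have h1 : ε ∈ M.edgeSet := hmemE ⟨ε, hε⟩
    induction ε with
    | _ u v => exact ⟨(u, v), h1, rfl⟩
  choose uv hadj huv using hex
  set toPair : {x // x ∈ F₁} → Fin n × Fin n :=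
    fun ε => (φ (uv ε).1, φ (uv ε).2) with htoPair
  have htpinj : Function.Injective toPair := by
    intro ε ε' h
    rw [Prod.ext_iff] at h
    apply Subtype.ext
    rw [show (ε : Sym2 (Fin k)) = s((uv ε).1, (uv ε).2) from huv ε,
      show (ε' : Sym2 (Fin k)) = s((uv ε').1, (uv ε').2) from huv ε',
      φ.injective h.1, φ.injective h.2]
  set E' : Finset (Fin n × Fin n) := F₁.attach.image toPair with hE'
  have hE'card : E'.card = s' * k := by
    rw [hE', Finset.card_image_of_injective _ htpinj, Finset.card_attach, hF₁card]
  set S : Finset (Fin n) := Finset.image φ Finset.univ with hS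
  have hScard : S.card = k := by
    rw [hS, Finset.card_image_of_injective _ φ.injective]
    simp
  have hE'S : E' ⊆ S ×ˢ S := by
    intro q hq
    obtain ⟨ε, _, rfl⟩ := Finset.mem_image.1 hq
    exact Finset.mem_product.2 ⟨Finset.mem_image_of_mem _ (Finset.mem_univ _),
      Finset.mem_image_of_mem _ (Finset.mem_univ _)⟩
  -- choose a preimage edge for each pair of E'
  have hqex : ∀ q : {x // x ∈ E'}, ∃ ε : {x // x ∈ F₁}, toPair ε = q.1 := by
    rintro ⟨q, hq⟩
    obtain ⟨ε, hε, h⟩ := Finset.mem_image.1 hq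
    exact ⟨ε, h⟩
  choose eps heps using hqex
  -- the walks
  set w : ∀ q : {x // x ∈ E'}, (G ω).Walk (φ (uv (eps q)).1) (φ (uv (eps q)).2) :=
    fun q => P _ _ (hadj (eps q)) with hwdef
  have hlen1 : ∀ q, 1 ≤ (w q).length := by
    intro q
    rcases Nat.eq_zero_or_pos (w q).length with h0 | h; swap
    · exact h
    · exact absurd (φ.injective (SimpleGraph.Walk.eq_of_length_eq_zero h0))
        (hadj (eps q)).ne
  set IL : {x // x ∈ E'} → List (Fin n) := fun q => (w q).support.tail.dropLast with hILdef
  have hILlen : ∀ q, (IL q).length = (w q).length - 1 := by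
    intro q
    rw [hILdef]
    simp [SimpleGraph.Walk.length_support]
  have hILlt : ∀ q, (IL q).length < 2 * r + 1 := by
    intro q
    have h2 : (w q).length ≤ 2 * r + 1 := (hPath _ _ (hadj (eps q))).2
    have := hILlen q
    have := hlen1 q
    omega
  set g : {x // x ∈ E'} → PD n r :=
    fun q => ⟨⟨(IL q).length, hILlt q⟩, (IL q).get⟩ with hgdef
  -- the encoded lists are the supports of the walks
  have hsupp : ∀ q : {x // x ∈ E'}, wList q.1 (g q) = (w q).support := by
    intro q
    have htne : (w q).support.tail ≠ [] := by
      apply List.ne_nil_of_length_pos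
      rw [List.length_tail, SimpleGraph.Walk.length_support]
      have := hlen1 q; omega
    have hpair : φ (uv (eps q)).1 = q.1.1 ∧ φ (uv (eps q)).2 = q.1.2 := by
      have := heps q
      rw [htoPair, Prod.ext_iff] at this
      exact this
    have hlast : (w q).support.tail.getLast htne = φ (uv (eps q)).2 := by
      have e1 := getLast_eq_of_eq ((w q).support_eq_cons) (by simp) (List.cons_ne_nil _ _)
      rw [List.getLast_cons htne] at e1
      rw [← e1, (w q).getLast_support]
    calc wList q.1 (g q) = q.1.1 :: (IL q ++ [q.1.2]) := by
          rw [wList, hgdef]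
          congr 1
          congr 1
          exact List.ofFn_get _
      _ = (w q).support := by
          conv_lhs => rw [← hpair.1, ← hpair.2, ← hlast]
          rw [show IL q = (w q).support.tail.dropLast from rfl]
          conv_lhs => rw [List.dropLast_append_getLast htne]
          exact ((w q).support_eq_cons).symm
  have hpdE : ∀ q : {x // x ∈ E'}, pdE q.1 (g q) = (w q).edges.toFinset := by
    intro q
    rw [pdE, hsupp, walk_listEdges]
  have hcardq : ∀ q : {x // x ∈ E'},
      (pdE q.1 (g q)).card = (((g q).1 : ℕ) + 1) := by
    intro q
    rw [hpdE, List.toFinset_card_of_nodup (hPath _ _ (hadj (eps q))).1.isTrail.edges_nodup,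
      SimpleGraph.Walk.length_edges]
    have h1 := hlen1 q
    have h2 := hILlen q
    show (w q).length = (IL q).length + 1
    omega
  -- disjointness of the edge sets of distinct paths
  have hdisjall : ∀ q ∈ E'.attach, ∀ q' ∈ E'.attach, q ≠ q' →
      Disjoint (pdE q.1 (g q)) (pdE q'.1 (g q')) := by
    intro q _ q' _ hqq'
    have hepsne : eps q ≠ eps q' := by
      intro h
      exact hqq' (Subtype.ext (by rw [← heps q, ← heps q', h]))
    have hedgene : s((uv (eps q)).1, (uv (eps q)).2) ≠ s((uv (eps q')).1, (uv (eps q')).2) := by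
      intro h
      exact hepsne (Subtype.ext (by rw [huv (eps q), huv (eps q'), h]))
    rw [Finset.disjoint_left]
    intro x hx hx'
    rw [hpdE, List.mem_toFinset] at hx hx'
    induction x with
    | _ a b =>
      have hab : a ≠ b := by
        have := SimpleGraph.Walk.edges_subset_edgeSet _ hx
        rw [SimpleGraph.mem_edgeSet] at this
        exact this.ne
      have ha := hDisj _ _ _ _ (hadj (eps q)) (hadj (eps q')) hedgene a
        (SimpleGraph.Walk.fst_mem_support_of_mem_edges _ hx)
        (SimpleGraph.Walk.fst_mem_support_of_mem_edges _ hx')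
      have hb := hDisj _ _ _ _ (hadj (eps q)) (hadj (eps q')) hedgene b
        (SimpleGraph.Walk.snd_mem_support_of_mem_edges _ hx)
        (SimpleGraph.Walk.snd_mem_support_of_mem_edges _ hx')
      have key : ∀ (x1 x2 y1 y2 : Fin n), a = x1 ∨ a = x2 → b = x1 ∨ b = x2 →
          a ≠ b → s(x1, x2) = s(a, b) := by
        rintro x1 x2 y1 y2 (rfl | rfl) (rfl | rfl) hne
        · exact absurd rfl hne
        · rfl
        · exact Sym2.eq_swap
        · exact absurd rfl hne
      have h1 : s(φ (uv (eps q)).1, φ (uv (eps q)).2) = s(a, b) :=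
        key _ _ a b ha.1 hb.1 hab
      have h2 : s(φ (uv (eps q')).1, φ (uv (eps q')).2) = s(a, b) :=
        key _ _ a b ha.2 hb.2 hab
      have h3 := h1.trans h2.symm
      rw [Sym2.eq_iff] at h3
      apply hedgene
      rcases h3 with ⟨hu, hv⟩ | ⟨hu, hv⟩
      · rw [φ.injective hu, φ.injective hv]
      · rw [φ.injective hu, φ.injective hv, Sym2.eq_swap]
  have hGood : Good E' g := by
    rw [Good, bigE, Finset.card_biUnion hdisjall]
    exact Finset.sum_congr rfl fun q _ => hcardq q
  have hEvent : ∀ e ∈ bigE E' g, e ∈ (G ω).edgeSet := by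
    intro e he
    obtain ⟨q, _, he⟩ := Finset.mem_biUnion.1 he
    rw [hpdE, List.mem_toFinset] at he
    exact SimpleGraph.Walk.edges_subset_edgeSet _ he
  -- membership in the big union
  rw [BadSet]
  simp only [Set.mem_iUnion]
  exact ⟨k, Finset.mem_Icc.2 ⟨Nat.one_le_iff_ne_zero.2 hk, hkn⟩, S,
    Finset.mem_powersetCard.2 ⟨Finset.subset_univ _, hScard⟩, E',
    Finset.mem_powersetCard.2 ⟨hE'S, hE'card⟩, g, Finset.mem_univ _, hGood, hEvent⟩

end ERBE
open scoped Nat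
namespace ERBE

lemma pow_le_factorial_mul (a b : ℕ) : (a : ℝ) ^ b ≤ (b ! : ℝ) * 3 ^ a := by
  have h1 : (a : ℝ) ^ b / b ! ≤ Real.exp a := by
    calc (a : ℝ) ^ b / b ! ≤ ∑ i ∈ Finset.range (b + 1), (a : ℝ) ^ i / i ! :=
          Finset.single_le_sum (f := fun i => (a : ℝ) ^ i / i !)
            (fun i _ => by positivity) (Finset.self_mem_range_succ b)
      _ ≤ Real.exp a := Real.sum_le_exp_of_nonneg (by positivity) _
  have h2 : Real.exp a ≤ 3 ^ a := by
    calc Real.exp (a : ℝ) = Real.exp 1 ^ a := by rw [← Real.exp_nat_mul]; norm_num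
      _ ≤ 3 ^ a := pow_le_pow_left₀ (Real.exp_pos 1).le
          (le_of_lt (lt_trans Real.exp_one_lt_d9 (by norm_num))) a
  have hb : (0:ℝ) < b ! := by positivity
  calc (a : ℝ) ^ b = ((a : ℝ) ^ b / b !) * b ! := by field_simp
    _ ≤ Real.exp a * b ! := mul_le_mul_of_nonneg_right h1 hb.le
    _ ≤ 3 ^ a * b ! := mul_le_mul_of_nonneg_right h2 hb.le
    _ = (b ! : ℝ) * 3 ^ a := mul_comm _ _

lemma geom_34 (n : ℕ) : ∑ k ∈ Finset.Icc 1 n, ((3:ℝ)/4) ^ k ≤ 4 := by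
  calc ∑ k ∈ Finset.Icc 1 n, ((3:ℝ)/4) ^ k
      ≤ ∑ k ∈ Finset.range (n + 1), ((3:ℝ)/4) ^ k := by
        refine Finset.sum_le_sum_of_subset_of_nonneg ?_ (fun i _ _ => by positivity)
        intro x hx
        rw [Finset.mem_Icc] at hx
        rw [Finset.mem_range]
        omega
    _ ≤ 4 := by
        rw [geom_sum_eq (by norm_num : (3:ℝ)/4 ≠ 1)]
        have h1 : (0:ℝ) ≤ ((3:ℝ)/4) ^ (n + 1) := by positivity
        have h2 : ((3:ℝ)/4) ^ (n + 1) ≤ 1 := pow_le_one₀ (by norm_num) (by norm_num)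
        rw [div_le_iff_of_neg (by norm_num : ((3:ℝ)/4 - 1) < 0)]
        nlinarith

lemma sum_bound (n s' m₀ : ℕ) (B w : ℝ) (hn : 1 ≤ n) (hB : 1 ≤ B)
    (hs1 : 12 * B ≤ (s' : ℝ)) (hs2 : m₀ + 2 ≤ s')
    (hw0 : 0 ≤ w) (hwB : w ≤ B / n) :
    ∑ k ∈ Finset.Icc 1 n, (n.choose k : ℝ) * ((k * k).choose (s' * k) : ℝ) * w ^ (s' * k)
      ≤ 4 * ((m₀ + 1)! : ℝ) * ((n : ℝ) ^ (m₀ + 1))⁻¹ := by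
  have hN : (0:ℝ) < n := by exact_mod_cast hn
  have hs'pos : 0 < s' := by omega
  obtain ⟨s'', rfl⟩ : ∃ s'', s' = s'' + 1 := ⟨s' - 1, by omega⟩
  set s' := s'' + 1 with hs'def
  have hs''m : m₀ + 1 ≤ s'' := by omega
  have hterm : ∀ k ∈ Finset.Icc 1 n,
      (n.choose k : ℝ) * ((k * k).choose (s' * k) : ℝ) * w ^ (s' * k)
        ≤ ((m₀+1)! : ℝ) * ((3:ℝ)/4) ^ k / (n:ℝ) ^ (m₀ + 1) := by
    intro k hk
    rw [Finset.mem_Icc] at hk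
    obtain ⟨hk1, hk2⟩ := hk
    have hK : (0:ℝ) < k := by exact_mod_cast hk1
    have hKN : (k:ℝ) ≤ n := by exact_mod_cast hk2
    have hm : 0 < s' * k := by positivity
    have hmR : ((s' * k : ℕ) : ℝ) = (s' : ℝ) * (k : ℝ) := by push_cast; ring
    have hss : (0:ℝ) < (s' : ℝ) := by exact_mod_cast hs'pos
    -- bound the first binomial coefficient
    have bA : (n.choose k : ℝ) ≤ (3 * n / k) ^ k := by
      have h1 := Nat.choose_le_pow_div k n (α := ℝ)
      have h2 : (k:ℝ) ^ k ≤ (k ! : ℝ) * 3 ^ k := pow_le_factorial_mul k k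
      have hkf : (0:ℝ) < (k ! : ℝ) := by positivity
      calc (n.choose k : ℝ) ≤ (n:ℝ) ^ k / (k ! : ℝ) := h1
        _ ≤ (3 * n / k) ^ k := by
            rw [div_pow, div_le_div_iff₀ hkf (by positivity)]
            calc (n:ℝ) ^ k * (k:ℝ) ^ k ≤ (n:ℝ) ^ k * ((k ! : ℝ) * 3 ^ k) :=
                  mul_le_mul_of_nonneg_left h2 (by positivity)
              _ = (3 * (n:ℝ)) ^ k * (k ! : ℝ) := by rw [mul_pow]; ring
    -- bound the second binomial coefficient
    have bB : (((k * k).choose (s' * k)) : ℝ) ≤ (3 * k / s') ^ (s' * k) := by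
      have h1 := Nat.choose_le_pow_div (s' * k) (k * k) (α := ℝ)
      have h2 : ((s' * k : ℕ):ℝ) ^ (s' * k) ≤ ((s' * k)! : ℝ) * 3 ^ (s' * k) :=
        pow_le_factorial_mul (s' * k) (s' * k)
      have hmf : (0:ℝ) < ((s' * k)! : ℝ) := by positivity
      calc (((k * k).choose (s' * k)) : ℝ) ≤ ((k * k : ℕ):ℝ) ^ (s' * k) / ((s' * k)! : ℝ) := h1
        _ ≤ (3 * k / s') ^ (s' * k) := by
            rw [div_pow, div_le_div_iff₀ hmf (by positivity)]
            calc ((k * k : ℕ):ℝ) ^ (s' * k) * (s':ℝ) ^ (s' * k)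
                = ((s' * k : ℕ):ℝ) ^ (s' * k) * ((k:ℝ)) ^ (s' * k) := by
                  rw [hmR, ← mul_pow, ← mul_pow]
                  push_cast
                  ring_nf
              _ ≤ (((s' * k)! : ℝ) * 3 ^ (s' * k)) * (k:ℝ) ^ (s' * k) :=
                  mul_le_mul_of_nonneg_right h2 (by positivity)
              _ = (3 * (k:ℝ)) ^ (s' * k) * ((s' * k)! : ℝ) := by rw [mul_pow]; ring
    -- bound w
    have bC : w ^ (s' * k) ≤ (B / n) ^ (s' * k) := pow_le_pow_left₀ hw0 hwB _
    -- combine all three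
    have step1 : (n.choose k : ℝ) * ((k * k).choose (s' * k) : ℝ) * w ^ (s' * k)
        ≤ (3 * n / k) ^ k * ((3 * k / s') * (B / n)) ^ (s' * k) := by
      rw [mul_pow, mul_assoc]
      have h3 := mul_le_mul bB bC (by positivity) (by positivity)
      exact mul_le_mul bA h3 (by positivity) (by positivity)
    have step2 : ((3 * (k:ℝ) / s') * (B / n)) ≤ (k : ℝ) / (4 * n) := by
      rw [div_mul_div_comm, div_le_div_iff₀ (by positivity) (by positivity)]
      calc 3 * (k:ℝ) * B * (4 * n) = (12 * B) * ((k:ℝ) * n) := by ring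
        _ ≤ (s':ℝ) * ((k:ℝ) * n) := mul_le_mul_of_nonneg_right hs1 (by positivity)
        _ = (k:ℝ) * ((s':ℝ) * n) := by ring
    have hx4 : (k:ℝ)/(4*n) = (1/4) * ((k:ℝ)/n) := by ring
    have hx0 : (0:ℝ) ≤ (k:ℝ)/(4*n) := by positivity
    have hkn1 : (k:ℝ)/n ≤ 1 := by
      rw [div_le_one hN]; exact hKN
    have hkn0 : (0:ℝ) ≤ (k:ℝ)/n := by positivity
    have step3 : (n.choose k : ℝ) * ((k * k).choose (s' * k) : ℝ) * w ^ (s' * k)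
        ≤ ((3 * (n:ℝ) / k) * ((k:ℝ) / (4 * n)) ^ s') ^ k := by
      refine le_trans step1 ?_
      conv_rhs => rw [mul_pow, ← pow_mul]
      have h4 : (3 * (k:ℝ) / s' * (B / n)) ^ (s' * k) ≤ ((k:ℝ) / (4 * n)) ^ (s' * k) :=
        pow_le_pow_left₀ (by positivity) step2 _
      exact mul_le_mul_of_nonneg_left h4 (by positivity)
    have hinner : (3 * (n:ℝ) / k) * ((k:ℝ) / (4 * n)) ^ s'
        = (3/4) * ((1/4) ^ s'' * ((k:ℝ)/n) ^ s'') := by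
      have : ((k:ℝ)/(4*n)) ^ s' = ((k:ℝ)/(4*n)) ^ s'' * ((k:ℝ)/(4*n)) := by
        rw [hs'def, pow_succ]
      rw [this, hx4, mul_pow]
      field_simp
    have hinner2 : (3 * (n:ℝ) / k) * ((k:ℝ) / (4 * n)) ^ s'
        ≤ (1/4) * ((k:ℝ)/n) ^ (m₀ + 1) := by
      rw [hinner]
      have h5 : ((k:ℝ)/n) ^ s'' ≤ ((k:ℝ)/n) ^ (m₀ + 1) :=
        pow_le_pow_of_le_one hkn0 hkn1 hs''m
      have h6 : ((1:ℝ)/4) ^ s'' ≤ (1/4) ^ 1 :=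
        pow_le_pow_of_le_one (by norm_num) (by norm_num) (by omega)
      calc (3/4 : ℝ) * ((1/4) ^ s'' * ((k:ℝ)/n) ^ s'')
          ≤ (3/4 : ℝ) * ((1/4) ^ 1 * ((k:ℝ)/n) ^ (m₀ + 1)) := by
            refine mul_le_mul_of_nonneg_left ?_ (by norm_num)
            exact mul_le_mul h6 h5 (by positivity) (by positivity)
        _ ≤ (1/4) * ((k:ℝ)/n) ^ (m₀ + 1) := by
            rw [pow_one]
            nlinarith [pow_nonneg hkn0 (m₀ + 1)]
    have step4 : (n.choose k : ℝ) * ((k * k).choose (s' * k) : ℝ) * w ^ (s' * k)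
        ≤ ((1/4 : ℝ) * ((k:ℝ)/n) ^ (m₀ + 1)) ^ k := by
      refine le_trans step3 ?_
      exact pow_le_pow_left₀ (by positivity) hinner2 k
    have step5 : ((1/4 : ℝ) * ((k:ℝ)/n) ^ (m₀ + 1)) ^ k
        ≤ (1/4 : ℝ) ^ k * ((k:ℝ)/n) ^ (m₀ + 1) := by
      rw [mul_pow]
      refine mul_le_mul_of_nonneg_left ?_ (by positivity)
      calc (((k:ℝ)/n) ^ (m₀ + 1)) ^ k ≤ (((k:ℝ)/n) ^ (m₀ + 1)) ^ 1 :=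
            pow_le_pow_of_le_one (by positivity) (pow_le_one₀ hkn0 hkn1) hk1
        _ = ((k:ℝ)/n) ^ (m₀ + 1) := pow_one _
    have step6 : (1/4 : ℝ) ^ k * ((k:ℝ)/n) ^ (m₀ + 1)
        ≤ ((m₀+1)! : ℝ) * ((3:ℝ)/4) ^ k / (n:ℝ) ^ (m₀ + 1) := by
      have h7 : (k:ℝ) ^ (m₀ + 1) ≤ ((m₀+1)! : ℝ) * 3 ^ k := pow_le_factorial_mul k (m₀ + 1)
      calc (1/4 : ℝ) ^ k * ((k:ℝ)/n) ^ (m₀ + 1)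
          = (1/4 : ℝ) ^ k * ((k:ℝ) ^ (m₀ + 1) / (n:ℝ) ^ (m₀ + 1)) := by
            rw [div_pow (k:ℝ) (n:ℝ) (m₀ + 1)]
        _ ≤ (1/4 : ℝ) ^ k * ((((m₀+1)! : ℝ) * 3 ^ k) / (n:ℝ) ^ (m₀ + 1)) := by
            refine mul_le_mul_of_nonneg_left ?_ (by positivity)
            exact div_le_div_of_nonneg_right h7 (by positivity)
        _ = ((m₀+1)! : ℝ) * ((3:ℝ)/4) ^ k / (n:ℝ) ^ (m₀ + 1) := by
            rw [div_pow (3:ℝ) 4 k, div_pow (1:ℝ) 4 k]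
            ring
    exact le_trans step4 (le_trans step5 step6)
  calc ∑ k ∈ Finset.Icc 1 n, (n.choose k : ℝ) * ((k * k).choose (s' * k) : ℝ) * w ^ (s' * k)
      ≤ ∑ k ∈ Finset.Icc 1 n, ((m₀+1)! : ℝ) * ((3:ℝ)/4) ^ k / (n:ℝ) ^ (m₀ + 1) :=
        Finset.sum_le_sum hterm
    _ = (((m₀+1)! : ℝ) / (n:ℝ) ^ (m₀ + 1)) * ∑ k ∈ Finset.Icc 1 n, ((3:ℝ)/4) ^ k := by
        rw [Finset.mul_sum]
        exact Finset.sum_congr rfl fun k _ => by ring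
    _ ≤ (((m₀+1)! : ℝ) / (n:ℝ) ^ (m₀ + 1)) * 4 := by
        refine mul_le_mul_of_nonneg_left (geom_34 n) (by positivity)
    _ = 4 * ((m₀ + 1)! : ℝ) * ((n : ℝ) ^ (m₀ + 1))⁻¹ := by
        field_simp

end ERBE
open scoped Nat ENNReal

/-- The Erdős–Rényi model `G(n, μ̄/n)` has bounded expansion with high probability: for every
`μ̄ > 0` and `c ≥ 1` there are `f : ℕ → ℝ` and a constant `C` such that for every `n` and
every `r`, `P[∇̃_r(G(n, μ̄/n)) ≥ f(r)] ≤ C·n^{−c}`. -/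
theorem erdos_renyi_bounded_expansion (μbar : ℝ) (hμ : 0 < μbar) (c : ℝ) (hc : 1 ≤ c) :
    ∃ (f : ℕ → ℝ) (C : ℝ), ∀ (n r : ℕ)
      (Ω : Type) (_ : MeasurableSpace Ω) (μ : Measure Ω) (_ : IsProbabilityMeasure μ)
      (G : Ω → SimpleGraph (Fin n)),
      IsErdosRenyi μ (μbar / n) G →
      μ {ω | f r ≤ (G ω).topGrad r} ≤ ENNReal.ofReal (C * (n : ℝ) ^ (-c)) := by
  classical
  set μ' : ℝ := max μbar 1 with hμ'
  have hμ'1 : 1 ≤ μ' := le_max_right _ _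
  set m₀ : ℕ := ⌈c⌉₊ with hm₀
  set Bf : ℕ → ℝ := fun r => ((2 * r + 1 : ℕ) : ℝ) * μ' ^ (2 * r + 1) with hBf
  have hBf1 : ∀ r, 1 ≤ Bf r := by
    intro r
    have h1 : (1:ℝ) ≤ ((2 * r + 1 : ℕ) : ℝ) := by exact_mod_cast Nat.one_le_iff_ne_zero.2 (by omega)
    have h2 : (1:ℝ) ≤ μ' ^ (2 * r + 1) := one_le_pow₀ hμ'1
    show (1:ℝ) ≤ ((2 * r + 1 : ℕ) : ℝ) * μ' ^ (2 * r + 1)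
    nlinarith
  set Sf : ℕ → ℕ := fun r => max (⌈(12:ℝ) * Bf r⌉₊) (m₀ + 2) with hSf
  refine ⟨fun r => ((Sf r : ℝ) + 1), 4 * ((m₀ + 1)! : ℝ), ?_⟩
  intro n r Ω _ μ _ G hER
  rcases Nat.eq_zero_or_pos n with rfl | hn
  · -- no vertices: the topological grad is 0
    have hempty : {ω | ((Sf r : ℝ) + 1) ≤ (G ω).topGrad r} = ∅ := by
      ext ω
      simp only [Set.mem_setOf_eq, Set.mem_empty_iff_false, iff_false, not_le]
      have htop : (G ω).topGrad r ≤ 0 := by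
        rw [SimpleGraph.topGrad]
        refine Real.sSup_le ?_ le_rfl
        rintro ρ hρ
        obtain ⟨k, M, hmod, rfl⟩ := hρ
        obtain ⟨phi, -⟩ := hmod
        have hk : k = 0 := by
          have := Fintype.card_le_of_embedding phi
          simpa using this
        subst hk
        simp
      have : (0:ℝ) < (Sf r : ℝ) + 1 := by positivity
      linarith
    rw [hempty, measure_empty]
    exact zero_le
  · -- main case
    set p : ℝ := μbar / n with hp
    have hp0 : 0 ≤ p := by positivity
    have hnR : (1:ℝ) ≤ (n:ℝ) := by exact_mod_cast hn
    have hnR0 : (0:ℝ) < (n:ℝ) := by linarith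
    set pb : ℝ := min 1 p with hpb
    have hpb0 : 0 ≤ pb := le_min zero_le_one hp0
    set wR : ℝ := ∑ j ∈ Finset.range (2 * r + 1), (n : ℝ) ^ j * pb ^ (j + 1) with hwR
    have hwR0 : 0 ≤ wR := Finset.sum_nonneg fun j _ => by positivity
    -- step 1: containment and union bound
    have h1 : μ {ω | ((Sf r : ℝ) + 1) ≤ (G ω).topGrad r} ≤ μ (ERBE.BadSet r (Sf r) G) :=
      measure_mono (ERBE.event_subset_badset G)
    have h2 := ERBE.badset_bound (r := r) μ p G hER (Sf r)
    -- step 2: convert the ENNReal bound to an ofReal bound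
    have hWconv : (∑ j ∈ Finset.range (2 * r + 1),
        (n : ℝ≥0∞) ^ j * ENNReal.ofReal pb ^ (j + 1)) = ENNReal.ofReal wR := by
      rw [hwR, ENNReal.ofReal_sum_of_nonneg (fun j _ => by positivity)]
      refine Finset.sum_congr rfl fun j _ => ?_
      rw [ENNReal.ofReal_mul (by positivity), ENNReal.ofReal_pow hpb0,
        ENNReal.ofReal_pow (by positivity : (0:ℝ) ≤ (n:ℝ)), ENNReal.ofReal_natCast]
    have h3 : μ (ERBE.BadSet r (Sf r) G) ≤ ENNReal.ofReal
        (∑ k ∈ Finset.Icc 1 n, (n.choose k : ℝ) * ((k * k).choose (Sf r * k) : ℝ)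
          * wR ^ (Sf r * k)) := by
      refine le_trans h2 ?_
      rw [hWconv]
      have hconv : ∀ k ∈ Finset.Icc 1 n,
          (n.choose k : ℝ≥0∞) * ((k * k).choose (Sf r * k) : ℝ≥0∞)
            * (ENNReal.ofReal wR) ^ (Sf r * k)
          = ENNReal.ofReal ((n.choose k : ℝ) * ((k * k).choose (Sf r * k) : ℝ)
            * wR ^ (Sf r * k)) := by
        intro k _
        rw [ENNReal.ofReal_mul (by positivity), ENNReal.ofReal_mul (by positivity),
          ENNReal.ofReal_pow hwR0, ENNReal.ofReal_natCast, ENNReal.ofReal_natCast]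
      refine le_of_eq ((Finset.sum_congr rfl hconv).trans ?_)
      exact (ENNReal.ofReal_sum_of_nonneg (fun k _ => by positivity)).symm
    -- step 3: the real bound
    have hs1 : 12 * Bf r ≤ ((Sf r : ℕ) : ℝ) := by
      have := Nat.le_ceil ((12:ℝ) * Bf r)
      have h4 : (⌈(12:ℝ) * Bf r⌉₊ : ℝ) ≤ ((Sf r : ℕ) : ℝ) := by
        exact_mod_cast le_max_left _ (m₀ + 2)
      linarith
    have hs2 : m₀ + 2 ≤ Sf r := le_max_right _ _
    have hwB : wR ≤ Bf r / n := by
      have hterm : ∀ j ∈ Finset.range (2 * r + 1),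
          (n : ℝ) ^ j * pb ^ (j + 1) ≤ μ' ^ (2 * r + 1) / n := by
        intro j hj
        rw [Finset.mem_range] at hj
        have hpbμ : pb ≤ μ' / n := by
          refine le_trans (min_le_right _ _) ?_
          rw [hp]
          exact div_le_div_of_nonneg_right (le_max_left _ _) hnR0.le
        calc (n : ℝ) ^ j * pb ^ (j + 1) ≤ (n : ℝ) ^ j * (μ' / n) ^ (j + 1) := by
              refine mul_le_mul_of_nonneg_left (pow_le_pow_left₀ hpb0 hpbμ _) (by positivity)
          _ = μ' ^ (j + 1) / n := by
              rw [div_pow]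
              rw [pow_succ (n:ℝ) j] at *
              field_simp
          _ ≤ μ' ^ (2 * r + 1) / n := by
              refine div_le_div_of_nonneg_right ?_ hnR0.le
              exact pow_le_pow_right₀ hμ'1 (by omega)
      calc wR ≤ ∑ _j ∈ Finset.range (2 * r + 1), μ' ^ (2 * r + 1) / n :=
            Finset.sum_le_sum hterm
        _ = Bf r / n := by
            rw [Finset.sum_const, Finset.card_range, nsmul_eq_mul, hBf]
            ring
    have h5 := ERBE.sum_bound n (Sf r) m₀ (Bf r) wR hn (hBf1 r) hs1 hs2 hwR0 hwB
    -- step 4: compare with the rpow bound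
    have h6 : ((n : ℝ) ^ (m₀ + 1))⁻¹ ≤ (n : ℝ) ^ (-c) := by
      rw [Real.rpow_neg (by positivity)]
      refine inv_anti₀ (Real.rpow_pos_of_pos hnR0 c) ?_
      calc (n:ℝ) ^ c ≤ (n:ℝ) ^ ((m₀ + 1 : ℕ) : ℝ) := by
            refine Real.rpow_le_rpow_of_exponent_le hnR ?_
            have := Nat.le_ceil c
            push_cast
            rw [hm₀] at *
            linarith [Nat.le_ceil c]
        _ = (n:ℝ) ^ (m₀ + 1) := by
            rw [Real.rpow_natCast]
    have h7 : (4 * ((m₀ + 1)! : ℝ)) * ((n : ℝ) ^ (m₀ + 1))⁻¹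
        ≤ (4 * ((m₀ + 1)! : ℝ)) * (n : ℝ) ^ (-c) :=
      mul_le_mul_of_nonneg_left h6 (by positivity)
    refine le_trans h1 (le_trans h3 (ENNReal.ofReal_le_ofReal ?_))
    calc (∑ k ∈ Finset.Icc 1 n, (n.choose k : ℝ) * ((k * k).choose (Sf r * k) : ℝ)
          * wR ^ (Sf r * k)) ≤ 4 * ((m₀ + 1)! : ℝ) * ((n : ℝ) ^ (m₀ + 1))⁻¹ := h5
      _ ≤ 4 * ((m₀ + 1)! : ℝ) * (n : ℝ) ^ (-c) := h7
end

section
/- For every integer t ≥ 0 and every function g : ℕ → ℝ there exists a function g′ : ℕ → ℝ such that the following holds. Let G be any finite graph with ∇̃_r(G) ≤ g(r) for all integers r ≥ 0, and for each vertex v of G let E_v be a set of at most t unordered pairs of neighbors of v. Let G′ be the graph obtained from G by adding all pairs in ⋃_{v ∈ V(G)} E_v as edges. Then ∇̃_r(G′) ≤ g′(r) for all integers r ≥ 0. In particular, if a class 𝒢 has bounded expansion, then the class of graphs obtained from members of 𝒢 by adding at most t edges inside the neighborhood of every vertex also has bounded expansion. -/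
open SimpleGraph

attribute [local instance] Classical.propDecidable

section Aux

variable {V : Type} (G : SimpleGraph V) (E : V → Set (Sym2 V))

noncomputable def apexOf (p : Sym2 V) (_hp : p ∈ ⋃ v, E v) : V :=
  (Set.mem_iUnion.mp _hp).choose

lemma apexOf_mem (p : Sym2 V) (hp : p ∈ ⋃ v, E v) : p ∈ E (apexOf E p hp) :=
  (Set.mem_iUnion.mp hp).choose_spec

lemma apexOf_adj (hE : ∀ v, ∀ e ∈ E v, ¬ e.IsDiag ∧ ∀ a ∈ e, G.Adj v a)
    (p : Sym2 V) (hp : p ∈ ⋃ v, E v) : ∀ a ∈ p, G.Adj (apexOf E p hp) a :=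
  (hE _ _ (apexOf_mem E p hp)).2

noncomputable def stepWalk (hE : ∀ v, ∀ e ∈ E v, ¬ e.IsDiag ∧ ∀ a ∈ e, G.Adj v a)
    {x z : V} (h : (G ⊔ fromEdgeSet (⋃ v, E v)).Adj x z) : G.Walk x z :=
  if hG : G.Adj x z then Walk.cons hG Walk.nil
  else
    have hU : s(x, z) ∈ ⋃ v, E v := by
      rcases (sup_adj _ _ _ _).mp h with h' | h'
      · exact absurd h' hG
      · exact ((fromEdgeSet_adj _).mp h').1
    Walk.cons ((apexOf_adj G E hE _ hU x (Sym2.mem_mk_left x z)).symm)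
      (Walk.cons (apexOf_adj G E hE _ hU z (Sym2.mem_mk_right x z)) Walk.nil)

lemma stepWalk_length (hE : ∀ v, ∀ e ∈ E v, ¬ e.IsDiag ∧ ∀ a ∈ e, G.Adj v a)
    {x z : V} (h : (G ⊔ fromEdgeSet (⋃ v, E v)).Adj x z) :
    (stepWalk G E hE h).length ≤ 2 := by
  unfold stepWalk
  split <;> simp

lemma stepWalk_support (hE : ∀ v, ∀ e ∈ E v, ¬ e.IsDiag ∧ ∀ a ∈ e, G.Adj v a)
    {x z : V} (h : (G ⊔ fromEdgeSet (⋃ v, E v)).Adj x z) :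
    ∀ a ∈ (stepWalk G E hE h).support,
      a = x ∨ a = z ∨ ∃ hU : s(x, z) ∈ (⋃ v, E v), ¬ G.Adj x z ∧ a = apexOf E s(x, z) hU := by
  intro a ha
  unfold stepWalk at ha
  split at ha
  · simp only [Walk.support_cons, Walk.support_nil, List.mem_cons, List.mem_singleton] at ha
    tauto
  · simp only [Walk.support_cons, Walk.support_nil, List.mem_cons, List.mem_singleton] at ha
    rcases ha with rfl | rfl | rfl | h'
    · exact Or.inl rfl
    · exact Or.inr (Or.inr ⟨_, by assumption, rfl⟩)
    · exact Or.inr (Or.inl rfl)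
    · exact absurd h' (by simp)

noncomputable def detourWalk (hE : ∀ v, ∀ e ∈ E v, ¬ e.IsDiag ∧ ∀ a ∈ e, G.Adj v a) :
    ∀ {x y : V}, (G ⊔ fromEdgeSet (⋃ v, E v)).Walk x y → G.Walk x y
  | _, _, .nil => .nil
  | _, _, .cons h q => (stepWalk G E hE h).append (detourWalk hE q)

lemma detourWalk_length (hE : ∀ v, ∀ e ∈ E v, ¬ e.IsDiag ∧ ∀ a ∈ e, G.Adj v a) :
    ∀ {x y : V} (w : (G ⊔ fromEdgeSet (⋃ v, E v)).Walk x y),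
    (detourWalk G E hE w).length ≤ 2 * w.length
  | _, _, .nil => by simp [detourWalk]
  | _, _, .cons h q => by
    rw [detourWalk, Walk.length_append, Walk.length_cons]
    have h1 := stepWalk_length G E hE h
    have h2 := detourWalk_length hE q
    omega

lemma detourWalk_support (hE : ∀ v, ∀ e ∈ E v, ¬ e.IsDiag ∧ ∀ a ∈ e, G.Adj v a) :
    ∀ {x y : V} (w : (G ⊔ fromEdgeSet (⋃ v, E v)).Walk x y),
    ∀ a ∈ (detourWalk G E hE w).support,
      a ∈ w.support ∨ ∃ x' z', ∃ hU : s(x', z') ∈ (⋃ v, E v),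
        s(x', z') ∈ w.edges ∧ ¬ G.Adj x' z' ∧ a = apexOf E s(x', z') hU
  | _, _, .nil => by
    intro a ha
    simp [detourWalk] at ha ⊢
    exact ha
  | x, y, .cons h q => by
    intro a ha
    rw [detourWalk, Walk.support_append] at ha
    rcases List.mem_append.mp ha with ha | ha
    · rcases stepWalk_support G E hE h a ha with rfl | rfl | ⟨hU, hnG, rfl⟩
      · exact Or.inl (Walk.start_mem_support _)
      · refine Or.inl ?_
        rw [Walk.support_cons]
        exact List.mem_cons_of_mem _ (Walk.start_mem_support q)
      · refine Or.inr ⟨_, _, hU, ?_, hnG, rfl⟩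
        rw [Walk.edges_cons]
        exact List.mem_cons_self
    · have ha' : a ∈ (detourWalk G E hE q).support := List.mem_of_mem_tail ha
      rcases detourWalk_support hE q a ha' with h' | ⟨x', z', hU, he, hnG, rfl⟩
      · refine Or.inl ?_
        rw [Walk.support_cons]
        exact List.mem_cons_of_mem _ h'
      · refine Or.inr ⟨x', z', hU, ?_, hnG, rfl⟩
        rw [Walk.edges_cons]
        exact List.mem_cons_of_mem _ he

end Aux

lemma indep_subset_of_bounded_degree {α : Type*} [DecidableEq α] (rel : α → α → Prop)
    (hsym : ∀ a b, rel a b → rel b a) (hirr : ∀ a, ¬ rel a a) (D : ℕ) :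
    ∀ F : Finset α, (∀ e ∈ F, (F.filter (rel e)).card ≤ D) →
      ∃ T ⊆ F, (∀ a ∈ T, ∀ b ∈ T, ¬ rel a b) ∧ F.card ≤ (D + 1) * T.card := by
  intro F
  induction F using Finset.strongInduction with
  | _ F ih =>
    intro hdeg
    rcases Finset.eq_empty_or_nonempty F with rfl | ⟨a, ha⟩
    · exact ⟨∅, Finset.Subset.refl _, by simp, by simp⟩
    · set S : Finset α := insert a (F.filter (rel a)) with hS
      have haS : a ∈ S := Finset.mem_insert_self _ _
      have hSsub : S ⊆ F := Finset.insert_subset ha (Finset.filter_subset _ _)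
      have hsub : F \ S ⊂ F := Finset.sdiff_ssubset hSsub ⟨a, haS⟩
      have hdeg' : ∀ e ∈ F \ S, ((F \ S).filter (rel e)).card ≤ D := by
        intro e he
        exact le_trans (Finset.card_le_card
          (Finset.filter_subset_filter _ Finset.sdiff_subset))
          (hdeg e (Finset.mem_sdiff.mp he).1)
      obtain ⟨T, hT1, hT2, hT3⟩ := ih (F \ S) hsub hdeg'
      have haT : a ∉ T := fun h => (Finset.mem_sdiff.mp (hT1 h)).2 haS
      refine ⟨insert a T, ?_, ?_, ?_⟩
      · exact Finset.insert_subset ha (hT1.trans Finset.sdiff_subset)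
      · intro b hb c hc hrel
        have key : ∀ c ∈ T, ¬ rel a c := by
          intro c hc hrel'
          have hcF := Finset.mem_sdiff.mp (hT1 hc)
          exact hcF.2 (Finset.mem_insert.mpr (Or.inr
            (Finset.mem_filter.mpr ⟨hcF.1, hrel'⟩)))
        rcases Finset.mem_insert.mp hb with hb' | hb' <;>
          rcases Finset.mem_insert.mp hc with hc' | hc'
        · subst hb'; subst hc'; exact hirr _ hrel
        · subst hb'; exact key c hc' hrel
        · subst hc'; exact key b hb' (hsym _ _ hrel)
        · exact hT2 b hb' c hc' hrel
      · have h1 : F.card ≤ (F \ S).card + S.card := Finset.card_le_card_sdiff_add_card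
        have h2 : S.card ≤ D + 1 := by
          refine le_trans (Finset.card_insert_le _ _) ?_
          have := hdeg a ha
          omega
        rw [Finset.card_insert_of_notMem haT]
        calc F.card ≤ (D + 1) * T.card + (D + 1) := by omega
        _ = (D + 1) * (T.card + 1) := by ring

lemma sym2_eq_of_two_mem {α : Type*} {x y a b : α} (hxy : x ≠ y)
    (hx : x = a ∨ x = b) (hy : y = a ∨ y = b) : s(x, y) = s(a, b) := by
  rcases hx with rfl | rfl <;> rcases hy with rfl | rfl <;> first
    | exact absurd rfl hxy
    | simp [Sym2.eq_iff]

namespace SimpleGraph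

def gradSet {V : Type*} (G : SimpleGraph V) (r : ℕ) : Set ℝ :=
  {ρ : ℝ | ∃ (k : ℕ) (M : SimpleGraph (Fin k)),
    G.IsSubdivModel M (2 * r) ∧ ρ = (M.edgeSet.ncard : ℝ) / k}

lemma topGrad_eq {V : Type*} (G : SimpleGraph V) (r : ℕ) : G.topGrad r = sSup (G.gradSet r) := rfl

lemma zero_mem_gradSet {V : Type*} (G : SimpleGraph V) (r : ℕ) : (0 : ℝ) ∈ G.gradSet r := by
  refine ⟨0, ⊥, ⟨⟨Fin.elim0, fun a => a.elim0⟩, fun u => u.elim0, fun u => u.elim0,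
    fun u => u.elim0, fun u v u' => u.elim0⟩, ?_⟩
  simp

lemma gradSet_le {V : Type*} [Fintype V] (G : SimpleGraph V) (r : ℕ) :
    ∀ ρ ∈ G.gradSet r, ρ ≤ (Fintype.card (Sym2 V) : ℝ) := by
  rintro ρ ⟨k, M, ⟨φ, -⟩, rfl⟩
  rcases Nat.eq_zero_or_pos k with rfl | hk
  · simp
  · have h1 : M.edgeSet.ncard ≤ Fintype.card (Sym2 (Fin k)) := by
      have := Set.ncard_le_ncard (Set.subset_univ M.edgeSet) (Set.toFinite _)
      rwa [Set.ncard_univ, Nat.card_eq_fintype_card] at this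
    have h2 : Fintype.card (Sym2 (Fin k)) ≤ Fintype.card (Sym2 V) :=
      Fintype.card_le_of_embedding ⟨Sym2.map φ, Sym2.map.injective φ.injective⟩
    have h3 : (M.edgeSet.ncard : ℝ) ≤ (Fintype.card (Sym2 V) : ℝ) := by
      exact_mod_cast le_trans h1 h2
    refine le_trans ?_ h3
    apply div_le_self (by positivity)
    exact_mod_cast hk

lemma gradSet_bddAbove {V : Type*} [Fintype V] (G : SimpleGraph V) (r : ℕ) :
    BddAbove (G.gradSet r) := ⟨_, gradSet_le G r⟩

lemma le_topGrad {V : Type*} [Fintype V] (G : SimpleGraph V) (r : ℕ) {ρ : ℝ}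
    (h : ρ ∈ G.gradSet r) : ρ ≤ G.topGrad r :=
  le_csSup (gradSet_bddAbove G r) h

lemma topGrad_le {V : Type*} (G : SimpleGraph V) (r : ℕ) {b : ℝ}
    (h : ∀ ρ ∈ G.gradSet r, ρ ≤ b) : G.topGrad r ≤ b :=
  csSup_le ⟨0, zero_mem_gradSet G r⟩ h

end SimpleGraph

/-- Adding at most `t` edges inside the neighborhood of every vertex preserves bounded
expansion: for every `t` and every expansion bound `g` there is a bound `g′` such that for
every finite graph `G` with `∇̃_r(G) ≤ g(r)` for all `r`, and every choice of sets `E v` of at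
most `t` unordered pairs of (distinct) neighbors of `v`, the graph `G′` obtained by adding all
these pairs as edges satisfies `∇̃_r(G′) ≤ g′(r)` for all `r`. -/
theorem add_edges_in_neighborhoods_bounded_expansion (t : ℕ) (g : ℕ → ℝ) :
    ∃ g' : ℕ → ℝ, ∀ (V : Type) (_ : Fintype V) (G : SimpleGraph V),
      (∀ r : ℕ, G.topGrad r ≤ g r) →
      ∀ E : V → Set (Sym2 V),
        (∀ v, (E v).ncard ≤ t) →
        (∀ v, ∀ e ∈ E v, ¬ e.IsDiag ∧ ∀ a ∈ e, G.Adj v a) →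
        ∀ r : ℕ, (G ⊔ SimpleGraph.fromEdgeSet (⋃ v, E v)).topGrad r ≤ g' r := by
  refine ⟨fun r => max 0 ((t : ℝ) + ((2 * (4 * r + 3) * (t + 1) + 1 : ℕ) : ℝ) * g (2 * r + 1)),
    ?_⟩
  intro V _ G hG E hEt hEad r
  apply topGrad_le
  rintro ρ ⟨k, M, ⟨φ, P, hP, hint, hdisj⟩, rfl⟩
  rcases Nat.eq_zero_or_pos k with rfl | hk
  · simp only [Nat.cast_zero, div_zero]
    exact le_max_left _ _
  have hkR : (0 : ℝ) < (k : ℝ) := by exact_mod_cast hk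
  set D : ℕ := 2 * (4 * r + 3) * (t + 1) with hD
  -- the finset of edges of M
  set F : Finset (Sym2 (Fin k)) := (M.edgeSet.toFinite).toFinset with hFdef
  have hFmem : ∀ e, e ∈ F ↔ e ∈ M.edgeSet := fun e => Set.Finite.mem_toFinset _
  have hFcard : M.edgeSet.ncard = F.card := Set.ncard_eq_toFinset_card _ _
  -- the rerouted walks in G
  set W : ∀ u v : Fin k, M.Adj u v → G.Walk (φ u) (φ v) :=
    fun u v h => (detourWalk G E hEad (P u v h)).bypass with hWdef
  have hW1 : ∀ u v (h : M.Adj u v), (W u v h).IsPath := fun u v h => Walk.bypass_isPath _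
  have hW2 : ∀ u v (h : M.Adj u v), (W u v h).length ≤ 4 * r + 2 := by
    intro u v h
    refine le_trans (Walk.length_bypass_le _) (le_trans (detourWalk_length G E hEad _) ?_)
    have := (hP u v h).2
    omega
  have hWsupp : ∀ u v (h : M.Adj u v) (a : V), a ∈ (W u v h).support →
      a ∈ (P u v h).support ∨ ∃ x z, ∃ hU : s(x, z) ∈ (⋃ w, E w),
        s(x, z) ∈ (P u v h).edges ∧ ¬ G.Adj x z ∧ a = apexOf E s(x, z) hU := by
    intro u v h a ha
    exact detourWalk_support G E hEad _ a (Walk.support_bypass_subset _ ha)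
  -- each edge of G' lies on the path of at most one edge of M
  have edge_unique : ∀ {u v u' v' : Fin k} (h : M.Adj u v) (h' : M.Adj u' v'),
      s(u, v) ≠ s(u', v') → ∀ p : Sym2 V,
      p ∈ (P u v h).edges → p ∈ (P u' v' h').edges → False := by
    intro u v u' v' h h' hne p hp hp'
    induction p using Sym2.ind with
    | _ x z =>
      have hx : x ∈ (P u v h).support := Walk.fst_mem_support_of_mem_edges _ hp
      have hz : z ∈ (P u v h).support := Walk.snd_mem_support_of_mem_edges _ hp
      have hx' : x ∈ (P u' v' h').support := Walk.fst_mem_support_of_mem_edges _ hp'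
      have hz' : z ∈ (P u' v' h').support := Walk.snd_mem_support_of_mem_edges _ hp'
      have hxz : x ≠ z := (Walk.adj_of_mem_edges _ hp).ne
      have c1 := hdisj u v u' v' h h' hne x hx hx'
      have c2 := hdisj u v u' v' h h' hne z hz hz'
      have e1 : s(x, z) = s(φ u, φ v) := sym2_eq_of_two_mem hxz c1.1 c2.1
      have e2 : s(x, z) = s(φ u', φ v') := sym2_eq_of_two_mem hxz c1.2 c2.2
      apply hne
      have e3 : s(φ u, φ v) = s(φ u', φ v') := e1.symm.trans e2
      rcases Sym2.eq_iff.mp e3 with ⟨ha, hb⟩ | ⟨ha, hb⟩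
      · rw [φ.injective ha, φ.injective hb]
      · rw [φ.injective ha, φ.injective hb, Sym2.eq_swap]
  -- bad edges: some used apex is a branch vertex
  set bad : Sym2 (Fin k) → Prop := fun e => ∃ u v, ∃ h : M.Adj u v, s(u, v) = e ∧
      ∃ x z, ∃ hU : s(x, z) ∈ (⋃ w, E w), s(x, z) ∈ (P u v h).edges ∧ ¬ G.Adj x z ∧
        apexOf E s(x, z) hU ∈ Set.range φ with hbaddef
  set touch : V → Sym2 (Fin k) → Prop := fun a e => ∃ u v, ∃ h : M.Adj u v, s(u, v) = e ∧
      a ∈ (W u v h).support with htouchdef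
  set conflict : Sym2 (Fin k) → Sym2 (Fin k) → Prop := fun e e' => e ≠ e' ∧
      ∃ a, a ∉ Set.range φ ∧ touch a e ∧ touch a e' with hconfdef
  -- counting bad edges
  have hbadcount : (F.filter bad).card ≤ t * k := by
    have hbadwit : ∀ e, bad e → ∃ w : Fin k × Sym2 V, w.2 ∈ E (φ w.1) ∧
        ∃ u v, ∃ h : M.Adj u v, s(u, v) = e ∧ w.2 ∈ (P u v h).edges := by
      rintro e ⟨u, v, h, rfl, x, z, hU, hedge, hnG, uu, huu⟩
      exact ⟨(uu, s(x, z)), by rw [huu]; exact apexOf_mem E _ hU, u, v, h, rfl, hedge⟩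
    set junk : Fin k × Sym2 V := (⟨0, hk⟩, s(φ ⟨0, hk⟩, φ ⟨0, hk⟩)) with hjunk
    set ψ : Sym2 (Fin k) → Fin k × Sym2 V :=
      fun e => if hb : bad e then (hbadwit e hb).choose else junk with hψ
    set tgt : Finset (Fin k × Sym2 V) :=
      Finset.univ.biUnion (fun u : Fin k => ((E (φ u)).toFinite.toFinset).image
        (fun p => (u, p))) with htgt
    have htgtcard : tgt.card ≤ t * k := by
      have h1 : tgt.card ≤
          ∑ u : Fin k, (((E (φ u)).toFinite.toFinset).image (fun p => (u, p))).card :=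
        Finset.card_biUnion_le
      have h2 : ∀ u : Fin k,
          (((E (φ u)).toFinite.toFinset).image (fun p => (u, p))).card ≤ t := by
        intro u
        refine le_trans Finset.card_image_le ?_
        rw [← Set.ncard_eq_toFinset_card]
        exact hEt _
      have h3 : ∑ u : Fin k, (((E (φ u)).toFinite.toFinset).image (fun p => (u, p))).card ≤
          ∑ _u : Fin k, t := Finset.sum_le_sum (fun u _ => h2 u)
      rw [Finset.sum_const, Finset.card_univ, Fintype.card_fin, smul_eq_mul] at h3
      exact le_trans (le_trans h1 h3) (le_of_eq (Nat.mul_comm k t))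
    refine le_trans (Finset.card_le_card_of_injOn ψ ?_ ?_) htgtcard
    · intro e he
      have hb : bad e := (Finset.mem_filter.mp he).2
      obtain ⟨hmem, -⟩ := (hbadwit e hb).choose_spec
      rw [hψ]
      simp only [dif_pos hb]
      refine Finset.mem_biUnion.mpr ⟨(hbadwit e hb).choose.1, Finset.mem_univ _,
        Finset.mem_image.mpr ⟨(hbadwit e hb).choose.2, (Set.Finite.mem_toFinset _).mpr hmem,
          Prod.mk.eta⟩⟩
    · intro e he e' he' heq
      have hb : bad e := (Finset.mem_filter.mp (Finset.mem_coe.mp he)).2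
      have hb' : bad e' := (Finset.mem_filter.mp (Finset.mem_coe.mp he')).2
      obtain ⟨-, u, v, h, hsv, hedge⟩ := (hbadwit e hb).choose_spec
      obtain ⟨-, u', v', h', hsv', hedge'⟩ := (hbadwit e' hb').choose_spec
      by_contra hne
      rw [hψ] at heq
      simp only [dif_pos hb, dif_pos hb'] at heq
      refine edge_unique h h' ?_ (hbadwit e hb).choose.2 hedge ?_
      · rw [hsv, hsv']; exact hne
      · rw [heq]; exact hedge'
  -- at most t+1 edges touch any non-branch vertex
  have htouchcount : ∀ a, a ∉ Set.range φ → (F.filter (touch a)).card ≤ t + 1 := by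
    intro a haR
    set A1 : Finset (Sym2 (Fin k)) := F.filter (fun e => ∃ u v, ∃ h : M.Adj u v,
      s(u, v) = e ∧ a ∈ (P u v h).support) with hA1def
    set A2 : Finset (Sym2 (Fin k)) := F.filter (fun e => ∃ u v, ∃ h : M.Adj u v,
      s(u, v) = e ∧ ∃ x z, ∃ hU : s(x, z) ∈ (⋃ w, E w),
        s(x, z) ∈ (P u v h).edges ∧ a = apexOf E s(x, z) hU) with hA2def
    have hsub : F.filter (touch a) ⊆ A1 ∪ A2 := by
      intro e he
      obtain ⟨heF, u, v, h, rfl, hsupp⟩ := Finset.mem_filter.mp he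
      rcases hWsupp u v h a hsupp with h1 | ⟨x, z, hU, hedge, hnG, rfl⟩
      · exact Finset.mem_union_left _ (Finset.mem_filter.mpr ⟨heF, u, v, h, rfl, h1⟩)
      · exact Finset.mem_union_right _
          (Finset.mem_filter.mpr ⟨heF, u, v, h, rfl, x, z, hU, hedge, rfl⟩)
    have hA1card : A1.card ≤ 1 := by
      rw [Finset.card_le_one]
      intro e he e' he'
      obtain ⟨-, u, v, h, rfl, hs⟩ := Finset.mem_filter.mp he
      obtain ⟨-, u', v', h', rfl, hs'⟩ := Finset.mem_filter.mp he'
      by_contra hne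
      exact haR (((hdisj u v u' v' h h' hne a hs hs').1).elim
        (fun hh => ⟨u, hh.symm⟩) (fun hh => ⟨v, hh.symm⟩))
    have hA2card : A2.card ≤ t := by
      have hwit : ∀ e, e ∈ A2 → ∃ p : Sym2 V, p ∈ E a ∧
          ∃ u v, ∃ h : M.Adj u v, s(u, v) = e ∧ p ∈ (P u v h).edges := by
        intro e he
        obtain ⟨-, u, v, h, hsv, x, z, hU, hedge, ha⟩ := Finset.mem_filter.mp he
        refine ⟨s(x, z), ?_, u, v, h, hsv, hedge⟩
        rw [ha]; exact apexOf_mem E _ hU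
      set θ : Sym2 (Fin k) → Sym2 V :=
        fun e => if hb : e ∈ A2 then (hwit e hb).choose else s(φ ⟨0, hk⟩, φ ⟨0, hk⟩) with hθ
      have hcard : A2.card ≤ ((E a).toFinite.toFinset).card := by
        refine Finset.card_le_card_of_injOn θ ?_ ?_
        · intro e he
          rw [hθ]
          simp only [dif_pos (Finset.mem_coe.mp he)]
          exact (Set.Finite.mem_toFinset _).mpr (hwit e he).choose_spec.1
        · intro e he e' he' heq
          have he2 : e ∈ A2 := Finset.mem_coe.mp he
          have he2' : e' ∈ A2 := Finset.mem_coe.mp he'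
          obtain ⟨-, u, v, h, hsv, hedge⟩ := (hwit e he2).choose_spec
          obtain ⟨-, u', v', h', hsv', hedge'⟩ := (hwit e' he2').choose_spec
          by_contra hne
          rw [hθ] at heq
          simp only [dif_pos he2, dif_pos he2'] at heq
          refine edge_unique h h' ?_ (hwit e he2).choose hedge ?_
          · rw [hsv, hsv']; exact hne
          · rw [heq]; exact hedge'
      rw [← Set.ncard_eq_toFinset_card] at hcard
      exact le_trans hcard (hEt a)
    calc (F.filter (touch a)).card ≤ (A1 ∪ A2).card := Finset.card_le_card hsub
    _ ≤ A1.card + A2.card := Finset.card_union_le _ _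
    _ ≤ t + 1 := by omega
  -- conflict degree bound
  have hdeg : ∀ e ∈ F.filter (fun e => ¬ bad e),
      ((F.filter (fun e => ¬ bad e)).filter (conflict e)).card ≤ D := by
    intro e he
    have heM : e ∈ M.edgeSet := (hFmem e).mp (Finset.filter_subset _ _ he)
    obtain ⟨a, b, hab, rfl⟩ : ∃ a b, ∃ hab : M.Adj a b, s(a, b) = e := by
      clear he
      revert heM
      induction e using Sym2.ind with
      | _ a b => exact fun heM => ⟨a, b, M.mem_edgeSet.mp heM, rfl⟩
    set X : Finset V := ((W a b hab).support.toFinset ∪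
      (W b a hab.symm).support.toFinset).filter (fun x => x ∉ Set.range φ) with hXdef
    have hXcard : X.card ≤ 2 * (4 * r + 3) := by
      have c1 : (W a b hab).support.toFinset.card ≤ 4 * r + 3 := by
        have l1 := List.toFinset_card_le (W a b hab).support
        have m1 := hW2 a b hab
        have n1 := Walk.length_support (W a b hab)
        omega
      have c2 : (W b a hab.symm).support.toFinset.card ≤ 4 * r + 3 := by
        have l2 := List.toFinset_card_le (W b a hab.symm).support
        have m2 := hW2 b a hab.symm
        have n2 := Walk.length_support (W b a hab.symm)
        omega
      refine le_trans (Finset.card_filter_le _ _) (le_trans (Finset.card_union_le _ _) ?_)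
      omega
    have hcover : (F.filter (fun e => ¬ bad e)).filter (conflict s(a, b)) ⊆
        X.biUnion (fun x => F.filter (touch x)) := by
      intro e' he'
      obtain ⟨he'1, hne, x, hxR, hx1, hx2⟩ := Finset.mem_filter.mp he'
      have he'F : e' ∈ F := Finset.filter_subset _ _ he'1
      refine Finset.mem_biUnion.mpr ⟨x, ?_, Finset.mem_filter.mpr ⟨he'F, hx2⟩⟩
      rw [hXdef]
      refine Finset.mem_filter.mpr ⟨?_, hxR⟩
      obtain ⟨u, v, h, hsv, hxsupp⟩ := hx1
      rcases Sym2.eq_iff.mp hsv with ⟨rfl, rfl⟩ | ⟨rfl, rfl⟩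
      · exact Finset.mem_union_left _ (List.mem_toFinset.mpr hxsupp)
      · exact Finset.mem_union_right _ (List.mem_toFinset.mpr hxsupp)
    calc ((F.filter (fun e => ¬ bad e)).filter (conflict s(a, b))).card
        ≤ (X.biUnion (fun x => F.filter (touch x))).card := Finset.card_le_card hcover
    _ ≤ ∑ x ∈ X, (F.filter (touch x)).card := Finset.card_biUnion_le
    _ ≤ ∑ _x ∈ X, (t + 1) := by
        refine Finset.sum_le_sum ?_
        intro x hx
        refine htouchcount x ?_
        rw [hXdef] at hx
        exact (Finset.mem_filter.mp hx).2
    _ = X.card * (t + 1) := by rw [Finset.sum_const, smul_eq_mul]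
    _ ≤ D := by rw [hD]; exact Nat.mul_le_mul_right _ hXcard
  -- independent set
  obtain ⟨T, hTsub, hTindep, hTcard⟩ := indep_subset_of_bounded_degree conflict
    (fun a b hab => ⟨hab.1.symm, hab.2.imp (fun x hx => ⟨hx.1, hx.2.2, hx.2.1⟩)⟩)
    (fun a haa => haa.1 rfl) D (F.filter (fun e => ¬ bad e))
    (by intro e he
        rw [Finset.filter_congr_decidable]
        exact hdeg e he)
  have hTF : T ⊆ F := hTsub.trans (Finset.filter_subset _ _)
  have hTedge : ∀ e ∈ T, e ∈ M.edgeSet := fun e he => (hFmem e).mp (hTF he)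
  have hTnotbad : ∀ e ∈ T, ¬ bad e := fun e he => (Finset.mem_filter.mp (hTsub he)).2
  -- the submodel given by T is a model in G
  have hTmodel : ((T.card : ℝ)) / k ≤ G.topGrad (2 * r + 1) := by
    set M' : SimpleGraph (Fin k) := fromEdgeSet (↑T : Set (Sym2 (Fin k))) with hM'def
    have hM'adj : ∀ {u v : Fin k}, M'.Adj u v → M.Adj u v ∧ s(u, v) ∈ T := by
      intro u v h
      obtain ⟨hmem, -⟩ := (fromEdgeSet_adj _).mp h
      exact ⟨M.mem_edgeSet.mp (hTedge _ hmem), hmem⟩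
    have hM'edge : M'.edgeSet = (↑T : Set (Sym2 (Fin k))) := by
      rw [hM'def, edgeSet_fromEdgeSet]
      ext e
      constructor
      · exact fun h => h.1
      · intro he
        exact ⟨he, fun hdiag =>
          SimpleGraph.not_isDiag_of_mem_edgeSet M (hTedge e he) hdiag⟩
    have hcond2 : ∀ u v (h : M.Adj u v), s(u, v) ∈ T → ∀ x, x ∈ (W u v h).support →
        x ≠ φ u → x ≠ φ v → x ∉ Set.range φ := by
      intro u v h hT x hx hxu hxv hxR
      rcases hWsupp u v h x hx with h1 | ⟨x', z', hU, hedge, hnG, rfl⟩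
      · exact hint u v h x h1 hxu hxv hxR
      · exact hTnotbad _ hT ⟨u, v, h, rfl, x', z', hU, hedge, hnG, hxR⟩
    have hmodel : G.IsSubdivModel M' (2 * (2 * r + 1)) := by
      refine ⟨φ, fun u v h => W u v (hM'adj h).1, ?_, ?_, ?_⟩
      · intro u v h
        refine ⟨hW1 _ _ _, ?_⟩
        show (W u v (hM'adj h).1).length ≤ 2 * (2 * r + 1) + 1
        have := hW2 u v (hM'adj h).1
        omega
      · intro u v h x hx hxu hxv
        exact hcond2 u v (hM'adj h).1 (hM'adj h).2 x hx hxu hxv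
      · intro u v u' v' h h' hne x hx hx'
        have hT1 := (hM'adj h).2
        have hT2 := (hM'adj h').2
        have hxR : x ∈ Set.range φ := by
          by_contra hxR
          exact hTindep _ hT1 _ hT2 ⟨hne, x, hxR,
            ⟨u, v, (hM'adj h).1, rfl, hx⟩, ⟨u', v', (hM'adj h').1, rfl, hx'⟩⟩
        constructor
        · by_contra hcon
          push_neg at hcon
          exact hcond2 u v (hM'adj h).1 hT1 x hx hcon.1 hcon.2 hxR
        · by_contra hcon
          push_neg at hcon
          exact hcond2 u' v' (hM'adj h').1 hT2 x hx' hcon.1 hcon.2 hxR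
    have hmem : ((T.card : ℝ)) / k ∈ G.gradSet (2 * r + 1) := by
      refine ⟨k, M', hmodel, ?_⟩
      rw [hM'edge, Set.ncard_coe_finset]
    exact le_topGrad G _ hmem
  -- arithmetic wrap-up
  have hsplit : F.card ≤ t * k + (D + 1) * T.card := by
    have := Finset.card_filter_add_card_filter_not (s := F) bad
    omega
  have hTk : (T.card : ℝ) ≤ g (2 * r + 1) * k := by
    have h1 : ((T.card : ℝ)) / k ≤ g (2 * r + 1) := le_trans hTmodel (hG (2 * r + 1))
    calc (T.card : ℝ) = (T.card : ℝ) / k * k := by field_simp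
    _ ≤ g (2 * r + 1) * k := by
        apply mul_le_mul_of_nonneg_right h1 (le_of_lt hkR)
  refine le_max_of_le_right ?_
  rw [hFcard, div_le_iff₀ hkR]
  calc (F.card : ℝ) ≤ (t * k : ℕ) + ((D + 1 : ℕ) : ℝ) * T.card := by
        exact_mod_cast hsplit
  _ ≤ (t : ℝ) * k + ((D + 1 : ℕ) : ℝ) * (g (2 * r + 1) * k) := by
        push_cast
        have : ((D : ℝ) + 1) ≥ 0 := by positivity
        nlinarith [hTk, this]
  _ = ((t : ℝ) + ((D + 1 : ℕ) : ℝ) * g (2 * r + 1)) * k := by push_cast; ring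
end
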